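/- arXiv:2502.15489 — 8 statements merged into one kernel-verified Lean document; each statement's English description precedes it below -/
import Mathlib

section
/- Let n ∈ ℕ, let a_1,…,a_n ∈ ℂ with |a_j| > 1 for all j, let w(z) = ∏_{j=1}^n (z − a_j) and let B be the associated Blaschke product. Let 0 < k ≤ 1, let s, m ∈ ℕ with s ≤ m ≤ n, let c ∈ ℂ with c ≠ 0, let b_1,…,b_{m−s} ∈ ℂ with |b_j| ≤ k for all j, and set p(z) = c · z^s · ∏_{j=1}^{m−s} (z − b_j) and r(z) = p(z)/w(z). Then for every z ∈ ℂ with |z| = 1, |r′(z)| ≥ (1/2) · { |B′(z)| − n + 2(m + s·k)/(1 + k) + 2·( ∑_{j=1}^{m−s} 1/(1 + |b_j|) − (m − s)/(1 + k) ) } · |r(z)|. -/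
open Complex Finset

lemma re_div_aux (u v : ℂ) : (u / v).re = (u * (starRingEnd ℂ) v).re / Complex.normSq v := by
  simp [Complex.div_re, Complex.mul_re, Complex.conj_re, Complex.conj_im]
  ring

lemma pole_id {z a : ℂ} (hz : ‖z‖ = 1) (ha : z - a ≠ 0) :
    (z / (z - a)).re = (1 + (1 - Complex.normSq a) / Complex.normSq (z - a)) / 2 := by
  have h1 : Complex.normSq z = 1 := by
    rw [← Complex.sq_norm, hz]; norm_num
  have hN : Complex.normSq (z - a) ≠ 0 := by
    simpa [Complex.normSq_eq_zero] using ha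
  have h2 : Complex.normSq (z - a) = 1 + Complex.normSq a - 2 * (z * (starRingEnd ℂ) a).re := by
    rw [Complex.normSq_sub, h1]
  have h3 : (z * (starRingEnd ℂ) (z - a)).re = 1 - (z * (starRingEnd ℂ) a).re := by
    rw [map_sub, mul_sub]
    simp [Complex.mul_conj, h1]
  have hx : (z * (starRingEnd ℂ) a).re = (1 + Complex.normSq a - Complex.normSq (z - a)) / 2 := by
    linarith [h2]
  rw [re_div_aux, h3, hx]
  field_simp
  ring

lemma zero_bound {z b : ℂ} (hz : ‖z‖ = 1) (hb : ‖b‖ ≤ 1) (hne : z - b ≠ 0) :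
    1 / (1 + ‖b‖) ≤ (z / (z - b)).re := by
  have h1 : Complex.normSq z = 1 := by rw [← Complex.sq_norm, hz]; norm_num
  have hN : 0 < Complex.normSq (z - b) := Complex.normSq_pos.mpr hne
  have ht0 : 0 ≤ ‖b‖ := norm_nonneg b
  have hx : |(z * (starRingEnd ℂ) b).re| ≤ ‖b‖ := by
    refine (Complex.abs_re_le_norm _).trans ?_
    rw [norm_mul, Complex.norm_conj, hz, one_mul]
  have h2 : Complex.normSq (z - b) = 1 + Complex.normSq b - 2 * (z * (starRingEnd ℂ) b).re := by
    rw [Complex.normSq_sub, h1]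
  have h3 : (z * (starRingEnd ℂ) (z - b)).re = 1 - (z * (starRingEnd ℂ) b).re := by
    rw [map_sub, mul_sub]
    simp [Complex.mul_conj, h1]
  have hb2 : Complex.normSq b = ‖b‖ ^ 2 := (Complex.sq_norm b).symm
  rw [re_div_aux, h3, div_le_div_iff₀ (by linarith) hN]
  obtain ⟨hxl, hxr⟩ := abs_le.mp hx
  nlinarith [mul_nonneg (sub_nonneg.mpr hb)
    (by linarith : (0:ℝ) ≤ (z * (starRingEnd ℂ) b).re + ‖b‖)]

lemma prod_deriv_aux {n : ℕ} (a : Fin n → ℂ) (z : ℂ) (hza : ∀ j, z - a j ≠ 0) :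
    HasDerivAt (fun y => ∏ j, (y - a j)) ((∏ j, (z - a j)) * ∑ j, (z - a j)⁻¹) z := by
  have h0 : HasDerivAt (fun y => ∏ j, (y - a j))
      (∑ j, (∏ i ∈ Finset.univ.erase j, (z - a i)) • (1:ℂ)) z :=
    HasDerivAt.fun_finsetProd (fun j _ => by simpa using (hasDerivAt_id z).sub_const (a j))
  convert h0 using 1
  rw [Finset.mul_sum]
  refine Finset.sum_congr rfl fun j _ => ?_
  rw [smul_eq_mul, mul_one, ← Finset.mul_prod_erase _ _ (Finset.mem_univ j)]
  field_simp [hza j]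

theorem turan_rational_sfold_zeros
    (n : ℕ) (a : Fin n → ℂ) (ha : ∀ j, 1 < ‖a j‖)
    (w B : ℂ → ℂ)
    (hw : ∀ z, w z = ∏ j, (z - a j))
    (hB : ∀ z, B z = ∏ j, (1 - (starRingEnd ℂ) (a j) * z) / (z - a j))
    (k : ℝ) (hk0 : 0 < k) (hk1 : k ≤ 1)
    (s m : ℕ) (hsm : s ≤ m) (hmn : m ≤ n)
    (c : ℂ) (hc : c ≠ 0)
    (b : Fin (m - s) → ℂ) (hb : ∀ j, ‖b j‖ ≤ k)
    (p r : ℂ → ℂ)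
    (hp : ∀ z, p z = c * z ^ s * ∏ j, (z - b j))
    (hr : ∀ z, r z = p z / w z)
    (z : ℂ) (hz : ‖z‖ = 1) :
    ‖deriv r z‖ ≥
      (1 / 2) * (‖deriv B z‖ - (n : ℝ)
        + 2 * ((m : ℝ) + (s : ℝ) * k) / (1 + k)
        + 2 * ((∑ j, 1 / (1 + ‖b j‖)) - ((m : ℝ) - (s : ℝ)) / (1 + k)))
        * ‖r z‖ := by
  classical
  have hz0 : z ≠ 0 := by
    intro h; rw [h] at hz; simp at hz
  have hnz : Complex.normSq z = 1 := by rw [← Complex.sq_norm, hz]; norm_num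
  have hza : ∀ j, z - a j ≠ 0 := by
    intro j h
    rw [sub_eq_zero] at h
    have := ha j
    rw [← h, hz] at this
    linarith
  have hwz : w z ≠ 0 := by
    rw [hw]; exact Finset.prod_ne_zero_iff.mpr fun j _ => hza j
  -- the bound on |B'(z)|
  have hBbound : ‖deriv B z‖ ≤
      ∑ j, (Complex.normSq (a j) - 1) / Complex.normSq (z - a j) := by
    have hfd : ∀ j : Fin n, HasDerivAt (fun y => (1 - (starRingEnd ℂ) (a j) * y) / (y - a j))
        (((Complex.normSq (a j) : ℂ) - 1) / (z - a j) ^ 2) z := by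
      intro j
      have hnum : HasDerivAt (fun y : ℂ => 1 - (starRingEnd ℂ) (a j) * y)
          (-((starRingEnd ℂ) (a j))) z := by
        simpa using (((hasDerivAt_id z).const_mul ((starRingEnd ℂ) (a j))).const_sub 1)
      have hden : HasDerivAt (fun y : ℂ => y - a j) 1 z := by
        simpa using (hasDerivAt_id z).sub_const (a j)
      have h := hnum.div hden (hza j)
      refine h.congr_deriv ?_
      have hcm : ((starRingEnd ℂ) (a j)) * a j = (Complex.normSq (a j) : ℂ) := by
        rw [mul_comm, Complex.mul_conj]
      rw [div_left_inj' (pow_ne_zero 2 (hza j))]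
      linear_combination hcm
    have hBD : HasDerivAt B (∑ j, (∏ i ∈ Finset.univ.erase j,
        ((1 - (starRingEnd ℂ) (a i) * z) / (z - a i))) •
        (((Complex.normSq (a j) : ℂ) - 1) / (z - a j) ^ 2)) z := by
      have hfun : B = fun y => ∏ j, ((1 - (starRingEnd ℂ) (a j) * y) / (y - a j)) := funext hB
      rw [hfun]
      exact HasDerivAt.fun_finsetProd (fun j _ => hfd j)
    have habsf : ∀ j : Fin n, ‖(1 - (starRingEnd ℂ) (a j) * z) / (z - a j)‖ = 1 := by
      intro j
      have key : 1 - (starRingEnd ℂ) (a j) * z = (starRingEnd ℂ) (z - a j) * z := by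
        rw [map_sub, sub_mul]
        have h1 : (starRingEnd ℂ) z * z = 1 := by
          rw [mul_comm, Complex.mul_conj, hnz]; norm_num
        rw [h1]
      rw [key, norm_div, norm_mul, Complex.norm_conj, hz, mul_one,
        div_self (norm_ne_zero_iff.mpr (hza j))]
    rw [hBD.deriv]
    refine (norm_sum_le _ _).trans ?_
    refine Finset.sum_le_sum fun j _ => ?_
    rw [smul_eq_mul, norm_mul, norm_prod]
    rw [Finset.prod_congr rfl fun i _ => habsf i, Finset.prod_const_one, one_mul,
      norm_div, norm_pow]
    have h2 : ((Complex.normSq (a j) : ℂ) - 1) = ((Complex.normSq (a j) - 1 : ℝ) : ℂ) := by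
      push_cast; ring
    have h3 : (1:ℝ) ≤ Complex.normSq (a j) := by
      rw [← Complex.sq_norm]; nlinarith [ha j]
    rw [h2, Complex.norm_real, Real.norm_eq_abs, Complex.sq_norm,
      _root_.abs_of_nonneg (by linarith : (0:ℝ) ≤ Complex.normSq (a j) - 1)]
  -- main case split
  by_cases hrz : r z = 0
  · rw [hrz, norm_zero, mul_zero]
    exact norm_nonneg _
  have hpz : p z ≠ 0 := fun h => hrz (by rw [hr, h, zero_div])
  have hzb : ∀ j, z - b j ≠ 0 := by
    intro j h
    apply hpz
    rw [hp, Finset.prod_eq_zero (Finset.mem_univ j) h, mul_zero]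
  -- derivatives
  have hW : HasDerivAt w ((w z) * ∑ j, (z - a j)⁻¹) z := by
    have := prod_deriv_aux a z hza
    have hfun : w = fun y => ∏ j, (y - a j) := funext hw
    rw [hfun]
    simpa using this
  have hP : HasDerivAt p (p z * ((s:ℂ)/z + ∑ j, (z - b j)⁻¹)) z := by
    have h1 : HasDerivAt (fun y : ℂ => y ^ s) ((s:ℂ) * z ^ (s-1)) z := hasDerivAt_pow s z
    have h2 := prod_deriv_aux b z hzb
    have h3 := (h1.mul h2).const_mul c
    have hfun : p = fun y => c * (y ^ s * ∏ j, (y - b j)) := by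
      funext y; rw [hp]; ring
    rw [hfun]
    refine h3.congr_deriv (Eq.symm ?_)
    show c * (z ^ s * ∏ j, (z - b j)) * ((s:ℂ)/z + ∑ j, (z - b j)⁻¹) = _
    have hzs : (s:ℂ) * z ^ (s-1) * z = (s:ℂ) * z ^ s := by
      cases s with
      | zero => simp
      | succ t => simp [pow_succ]; ring
    field_simp
    ring_nf
    ring_nf at hzs
    linear_combination (-∏ j, (z - b j)) * hzs
  have hR : HasDerivAt r (r z * (((s:ℂ)/z + ∑ j, (z - b j)⁻¹) - ∑ j, (z - a j)⁻¹)) z := by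
    have h := hP.div hW hwz
    have hfun : r = fun y => p y / w y := funext hr
    rw [hfun]
    refine h.congr_deriv (Eq.symm ?_)
    show p z / w z * (((s:ℂ)/z + ∑ j, (z - b j)⁻¹) - ∑ j, (z - a j)⁻¹) = _
    rw [div_mul_eq_mul_div, div_eq_div_iff hwz (pow_ne_zero 2 hwz)]
    ring
  -- pass to F = z * (logarithmic derivative)
  set F : ℂ := (s:ℂ) + (∑ j, z / (z - b j)) - ∑ j, z / (z - a j) with hF
  have hzF : z * (((s:ℂ)/z + ∑ j, (z - b j)⁻¹) - ∑ j, (z - a j)⁻¹) = F := by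
    rw [hF, mul_sub, mul_add, Finset.mul_sum, Finset.mul_sum,
      mul_comm z ((s:ℂ)/z), div_mul_cancel₀ _ hz0]
    simp [div_eq_mul_inv]
  have habsD : ‖deriv r z‖ = ‖r z‖ * ‖F‖ := by
    rw [hR.deriv, norm_mul]
    congr 1
    rw [← hzF, norm_mul, hz, one_mul]
  -- real part estimates
  have hreF : F.re = (s:ℝ) + (∑ j, (z / (z - b j)).re) - ∑ j, (z / (z - a j)).re := by
    rw [hF]
    simp [Complex.add_re, Complex.sub_re, Complex.re_sum]
  have hre_b : (∑ j, 1/(1 + ‖b j‖)) ≤ ∑ j, (z / (z - b j)).re :=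
    Finset.sum_le_sum fun j _ => zero_bound hz ((hb j).trans hk1) (hzb j)
  have hre_a : ∑ j, (z / (z - a j)).re =
      ((n:ℝ) - ∑ j, (Complex.normSq (a j) - 1) / Complex.normSq (z - a j)) / 2 := by
    rw [Finset.sum_congr rfl fun j _ => pole_id hz (hza j)]
    rw [← Finset.sum_div, Finset.sum_add_distrib, Finset.sum_const, Finset.card_univ,
      Fintype.card_fin, nsmul_eq_mul, mul_one]
    have hnegsum : ∑ j, (1 - Complex.normSq (a j)) / Complex.normSq (z - a j)
        = - ∑ j, (Complex.normSq (a j) - 1) / Complex.normSq (z - a j) := by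
      rw [← Finset.sum_neg_distrib]
      exact Finset.sum_congr rfl fun j _ => by rw [← neg_div, neg_sub]
    rw [hnegsum]
    ring
  -- final coefficient computation
  set C : ℝ := (1 / 2) * (‖deriv B z‖ - (n : ℝ)
        + 2 * ((m : ℝ) + (s : ℝ) * k) / (1 + k)
        + 2 * ((∑ j, 1 / (1 + ‖b j‖)) - ((m : ℝ) - (s : ℝ)) / (1 + k))) with hC
  have hCeq : C = (‖deriv B z‖ - (n:ℝ)) / 2 + (s:ℝ)
      + ∑ j, 1 / (1 + ‖b j‖) := by
    rw [hC]
    field_simp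
    ring
  have hCF : C ≤ F.re := by
    rw [hCeq, hreF, hre_a]
    have := hBbound
    have := hre_b
    linarith
  calc ‖deriv r z‖ = ‖r z‖ * ‖F‖ := habsD
    _ ≥ ‖r z‖ * F.re :=
        mul_le_mul_of_nonneg_left (Complex.re_le_norm F) (norm_nonneg _)
    _ ≥ ‖r z‖ * C :=
        mul_le_mul_of_nonneg_left hCF (norm_nonneg _)
    _ = C * ‖r z‖ := mul_comm _ _
end

section
/- Let n ∈ ℕ, let a_1,…,a_n ∈ ℂ with |a_j| > 1 for all j, let w(z) = ∏_{j=1}^n (z − a_j) and let B be the associated Blaschke product. Let 0 < k ≤ 1, let s ∈ ℕ with s ≤ n, let c ∈ ℂ with c ≠ 0, let b_1,…,b_{n−s} ∈ ℂ with |b_j| ≤ k for all j, and set p(z) = c · z^s · ∏_{j=1}^{n−s} (z − b_j) and r(z) = p(z)/w(z). Then for every z ∈ ℂ with |z| = 1, |r′(z)| ≥ (1/2) · [ |B′(z)| + (n(1 − k) + 2·s·k)/(1 + k) + 2·( ∑_{j=1}^{n−s} 1/(1 + |b_j|) − (n − s)/(1 + k) ) ] · |r(z)|. -/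
open Complex Finset

lemma log_deriv_prod {m : ℕ} (z : ℂ) (u : Fin m → ℂ) (h : ∀ j, z - u j ≠ 0) :
    z * ∑ j, (∏ i ∈ Finset.univ.erase j, (z - u i)) =
      (∑ j, z / (z - u j)) * ∏ j, (z - u j) := by
  rw [Finset.mul_sum, Finset.sum_mul]
  refine Finset.sum_congr rfl fun j _ => ?_
  rw [← Finset.mul_prod_erase _ _ (Finset.mem_univ j)]
  field_simp [h j]

lemma key_re (z u : ℂ) (hz : z.re^2 + z.im^2 = 1) :
    (z/(z-u)).re * Complex.normSq (z - u) = 1 - (z.re*u.re + z.im*u.im) := by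
  rcases eq_or_ne (z - u) 0 with h | h
  · have hu : u = z := by rwa [sub_eq_zero, eq_comm] at h
    subst hu
    rw [sub_self]
    simp only [Complex.normSq_zero, mul_zero]
    ring_nf
    linarith [hz]
  · rw [Complex.div_re]
    have hm : Complex.normSq (z - u) ≠ 0 := (Complex.normSq_pos.2 h).ne'
    simp only [Complex.normSq_apply, Complex.sub_re, Complex.sub_im] at hm ⊢
    field_simp
    have hm' : (z.re - u.re) ^ 2 + (z.im - u.im) ^ 2 ≠ 0 := by rw [sq, sq]; exact hm
    rw [mul_div_cancel_left₀ _ hm']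
    ring_nf
    nlinarith [hz]

lemma hz1_of_abs (z : ℂ) (hz : ‖z‖ = 1) : z.re^2 + z.im^2 = 1 := by
  have h := Complex.sq_norm z
  rw [hz, Complex.normSq_apply] at h
  ring_nf
  ring_nf at h
  linarith

lemma normSq_sub_eq (z u : ℂ) (hz : ‖z‖ = 1) :
    Complex.normSq (z - u) = 1 + Complex.normSq u - 2*(z.re*u.re + z.im*u.im) := by
  have h1 := hz1_of_abs z hz
  simp only [Complex.normSq_apply, Complex.sub_re, Complex.sub_im]
  ring_nf
  ring_nf at h1
  linarith

lemma re_term_pole (z aj : ℂ) (hz : ‖z‖ = 1) (ha : 1 < ‖aj‖) :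
    (z/(z - aj)).re = 1/2 - ((‖aj‖^2 - 1)/(‖z - aj‖)^2)/2 := by
  have hne : z - aj ≠ 0 := by
    intro h; rw [sub_eq_zero] at h; rw [h] at hz; rw [hz] at ha; exact lt_irrefl 1 ha
  have hm : 0 < Complex.normSq (z - aj) := Complex.normSq_pos.2 hne
  have K := key_re z aj (hz1_of_abs z hz)
  have hm2 := normSq_sub_eq z aj hz
  rw [Complex.sq_norm, Complex.sq_norm]
  field_simp
  nlinarith [K, hm2]

lemma re_term_zero (z bj : ℂ) (hz : ‖z‖ = 1) (hb1 : ‖bj‖ ≤ 1)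
    (hne : z - bj ≠ 0) :
    1 / (1 + ‖bj‖) ≤ (z/(z - bj)).re := by
  have hm : 0 < Complex.normSq (z - bj) := Complex.normSq_pos.2 hne
  have K := key_re z bj (hz1_of_abs z hz)
  have hm2 := normSq_sub_eq z bj hz
  set t := z.re*bj.re + z.im*bj.im with ht
  have htle : t ≤ ‖bj‖ := by
    have h1 : t = (z * (starRingEnd ℂ) bj).re := by
      simp [Complex.mul_re, Complex.conj_re, Complex.conj_im, ht]
    rw [h1]
    calc (z * (starRingEnd ℂ) bj).re ≤ ‖z * (starRingEnd ℂ) bj‖ := Complex.re_le_norm _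
      _ = ‖bj‖ := by rw [norm_mul, hz, Complex.norm_conj, one_mul]
  have htge : -(‖bj‖) ≤ t := by
    have h1 : t = (z * (starRingEnd ℂ) bj).re := by
      simp [Complex.mul_re, Complex.conj_re, Complex.conj_im, ht]
    rw [h1]
    have h3 := Complex.abs_re_le_norm (z * (starRingEnd ℂ) bj)
    have h2 : ‖z * (starRingEnd ℂ) bj‖ = ‖bj‖ := by
      rw [norm_mul, hz, Complex.norm_conj, one_mul]
    rw [h2] at h3
    cases abs_le.1 h3 with
    | intro h _ => linarith
  have hβν : Complex.normSq bj = ‖bj‖ ^ 2 := (Complex.sq_norm bj).symm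
  have hb0 : 0 ≤ ‖bj‖ := norm_nonneg bj
  rw [div_le_iff₀ (by linarith)]
  have hre : (z/(z - bj)).re = (1 - t) / Complex.normSq (z - bj) := by
    field_simp at K ⊢
    linarith [K]
  rw [hre]
  rw [div_mul_eq_mul_div, le_div_iff₀ hm]
  nlinarith [mul_nonneg (sub_nonneg.2 hb1) (by linarith : (0:ℝ) ≤ ‖bj‖ + t)]

lemma blaschke_factor_hasDerivAt (a z : ℂ) (hza : z - a ≠ 0) :
    HasDerivAt (fun y => (1 - (starRingEnd ℂ) a * y) / (y - a))
      (((Complex.normSq a : ℂ) - 1)/(z - a)^2) z := by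
  have hnum : HasDerivAt (fun y => 1 - (starRingEnd ℂ) a * y) (-((starRingEnd ℂ) a * 1)) z :=
    (((hasDerivAt_id z).const_mul ((starRingEnd ℂ) a))).const_sub 1
  have hden : HasDerivAt (fun y => y - a) 1 z := (hasDerivAt_id z).sub_const a
  have h := hnum.fun_div hden hza
  refine h.congr_deriv ?_
  have hma := Complex.mul_conj a
  congr 1
  linear_combination hma

lemma sq_abs_complex (x : ℂ) : ((‖x‖ : ℂ))^2 = x * (starRingEnd ℂ) x := by
  rw [← Complex.ofReal_pow, Complex.sq_norm, Complex.mul_conj]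

lemma conj_sub_ne (z a : ℂ) (h : z - a ≠ 0) : (starRingEnd ℂ) z - (starRingEnd ℂ) a ≠ 0 := by
  intro hh
  apply h
  have := congrArg (starRingEnd ℂ) hh
  simpa [map_sub] using this

lemma z_gd_eq (a z : ℂ) (hz : ‖z‖ = 1) (hza : z - a ≠ 0) :
    z * (((Complex.normSq a : ℂ) - 1)/(z - a)^2) =
      ((((‖a‖)^2 - 1)/(‖z - a‖)^2 : ℝ) : ℂ) *
        ((1 - (starRingEnd ℂ) a * z)/(z - a)) := by
  have hzc : z * (starRingEnd ℂ) z = 1 := by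
    rw [Complex.mul_conj, ← Complex.sq_norm, hz]; norm_num
  have e1 : (1 : ℂ) - (starRingEnd ℂ) a * z = z * (starRingEnd ℂ) (z - a) := by
    rw [map_sub]; linear_combination -hzc
  have e2 : (((‖z-a‖)^2 : ℝ) : ℂ) = (z-a) * (starRingEnd ℂ) (z-a) := by
    push_cast; rw [sq_abs_complex]
  have e3 : (((‖a‖)^2 : ℝ) : ℂ) = ((Complex.normSq a : ℝ) : ℂ) := by
    norm_cast; exact Complex.sq_norm a
  have hcne : (starRingEnd ℂ) (z - a) ≠ 0 := by
    intro hh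
    apply hza
    have := congrArg (starRingEnd ℂ) hh
    simpa using this
  push_cast
  push_cast at e2 e3
  rw [e2, e3, e1]
  have halg : ∀ u ν : ℂ, u ≠ 0 →
      z * ((ν - 1)/(z - a)^2) = ((ν - 1)/((z - a) * u)) * ((z * u)/(z - a)) := by
    intro u ν hu
    field_simp
  exact halg _ _ hcne

theorem turan_rational_sfold_zeros_full_degree
    (n : ℕ) (a : Fin n → ℂ) (ha : ∀ j, 1 < ‖a j‖)
    (w B : ℂ → ℂ)
    (hw : ∀ z, w z = ∏ j, (z - a j))
    (hB : ∀ z, B z = ∏ j, (1 - (starRingEnd ℂ) (a j) * z) / (z - a j))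
    (k : ℝ) (hk0 : 0 < k) (hk1 : k ≤ 1)
    (s : ℕ) (hsn : s ≤ n)
    (c : ℂ) (hc : c ≠ 0)
    (b : Fin (n - s) → ℂ) (hb : ∀ j, ‖b j‖ ≤ k)
    (p r : ℂ → ℂ)
    (hp : ∀ z, p z = c * z ^ s * ∏ j, (z - b j))
    (hr : ∀ z, r z = p z / w z)
    (z : ℂ) (hz : ‖z‖ = 1) :
    ‖deriv r z‖ ≥
      (1 / 2) * (‖deriv B z‖
        + ((n : ℝ) * (1 - k) + 2 * (s : ℝ) * k) / (1 + k)
        + 2 * ((∑ j, 1 / (1 + ‖b j‖)) - ((n : ℝ) - (s : ℝ)) / (1 + k)))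
        * ‖r z‖ := by
  have hza : ∀ j, z - a j ≠ 0 := by
    intro j h
    rw [sub_eq_zero] at h
    rw [h] at hz
    exact absurd hz (ne_of_gt (ha j))
  have hzc : z * (starRingEnd ℂ) z = 1 := by
    rw [Complex.mul_conj, ← Complex.sq_norm, hz]; norm_num
  -- notation
  set W : ℂ := ∏ j, (z - a j) with hWdef
  set Q : ℂ := ∏ j, (z - b j) with hQdef
  set P : ℂ := c * z ^ s * Q with hPdef
  have hW0 : W ≠ 0 := Finset.prod_ne_zero_iff.2 fun j _ => hza j
  -- T and its sum
  set T : Fin n → ℝ := fun j => ((‖a j‖)^2 - 1)/(‖z - a j‖)^2 with hTdef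
  have hT0 : ∀ j, 0 ≤ T j := by
    intro j
    apply div_nonneg
    · nlinarith [ha j]
    · positivity
  -- Blaschke derivative
  set g : Fin n → ℂ → ℂ := fun j y => (1 - (starRingEnd ℂ) (a j) * y) / (y - a j) with hgdef
  set gd : Fin n → ℂ := fun j => ((Complex.normSq (a j) : ℂ) - 1)/(z - a j)^2 with hgddef
  have hgD : ∀ j ∈ Finset.univ, HasDerivAt (g j) (gd j) z := fun j _ =>
    blaschke_factor_hasDerivAt (a j) z (hza j)
  have hBD : HasDerivAt B (∑ j, (∏ i ∈ Finset.univ.erase j, g i z) • gd j) z := by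
    have h := HasDerivAt.finset_prod hgD
    exact h.congr_of_eventuallyEq (Filter.Eventually.of_forall fun x => by rw [hB x, Finset.prod_apply])
  have habsg : ∀ j, ‖g j z‖ = 1 := by
    intro j
    have h1 : 1 - (starRingEnd ℂ) (a j) * z = z * ((starRingEnd ℂ) z - (starRingEnd ℂ) (a j)) := by
      linear_combination -hzc
    rw [hgdef]
    simp only
    rw [norm_div, h1, norm_mul, hz, one_mul]
    have h2 : (starRingEnd ℂ) z - (starRingEnd ℂ) (a j) = (starRingEnd ℂ) (z - a j) := by
      rw [map_sub]
    rw [h2, Complex.norm_conj, div_self (norm_ne_zero_iff.2 (hza j))]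
  have habsB : ‖∏ j, g j z‖ = 1 := by
    rw [norm_prod]
    exact Finset.prod_eq_one fun j _ => habsg j
  have hzDB : z * (∑ j, (∏ i ∈ Finset.univ.erase j, g i z) • gd j)
      = ((∑ j, T j : ℝ) : ℂ) * ∏ j, g j z := by
    push_cast
    rw [Finset.mul_sum, Finset.sum_mul]
    refine Finset.sum_congr rfl fun j _ => ?_
    have h1 : z * gd j = ((T j : ℝ) : ℂ) * g j z := z_gd_eq (a j) z hz (hza j)
    rw [smul_eq_mul, ← Finset.mul_prod_erase (Finset.univ) (fun i => g i z) (Finset.mem_univ j)]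
    calc z * ((∏ i ∈ Finset.univ.erase j, g i z) * gd j)
        = (∏ i ∈ Finset.univ.erase j, g i z) * (z * gd j) := by ring
      _ = (∏ i ∈ Finset.univ.erase j, g i z) * (((T j : ℝ) : ℂ) * g j z) := by rw [h1]
      _ = ((T j : ℝ) : ℂ) * (g j z * ∏ i ∈ Finset.univ.erase j, g i z) := by ring
  have habsDB : ‖deriv B z‖ = ∑ j, T j := by
    rw [hBD.deriv]
    have h1 : ‖z * (∑ j, (∏ i ∈ Finset.univ.erase j, g i z) • gd j)‖
        = ‖∑ j, (∏ i ∈ Finset.univ.erase j, g i z) • gd j‖ := by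
      rw [norm_mul, hz, one_mul]
    rw [← h1, hzDB, norm_mul, habsB, mul_one, Complex.norm_real, Real.norm_eq_abs,
      _root_.abs_of_nonneg (Finset.sum_nonneg fun j _ => hT0 j)]
  -- case r z = 0
  rcases eq_or_ne P 0 with hP0 | hP0
  · have hrz : r z = 0 := by rw [hr, hp, hw, ← hPdef, ← hWdef, hP0, zero_div]
    rw [hrz, norm_zero, mul_zero]
    exact norm_nonneg _
  -- nontrivial case
  have hz0 : z ≠ 0 := by
    intro h
    rw [h] at hz
    simp at hz
  have hQ0 : Q ≠ 0 := by
    intro h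
    apply hP0
    rw [hPdef, h, mul_zero]
  have hzb : ∀ j, z - b j ≠ 0 := fun j =>
    Finset.prod_ne_zero_iff.1 hQ0 j (Finset.mem_univ j)
  set Sb : ℂ := ∑ j, z / (z - b j) with hSbdef
  set Sa : ℂ := ∑ j, z / (z - a j) with hSadef
  set Dq : ℂ := ∑ j, (∏ i ∈ Finset.univ.erase j, (z - b i)) with hDqdef
  set Dw : ℂ := ∑ j, (∏ i ∈ Finset.univ.erase j, (z - a i)) with hDwdef
  have hWD : HasDerivAt (fun y => ∏ j, (y - a j)) Dw z := by
    have h := HasDerivAt.finset_prod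
      (fun (i : Fin n) (_ : i ∈ Finset.univ) => (hasDerivAt_id z).sub_const (a i))
    simpa [hDwdef, Finset.prod_fn] using h
  have hQD : HasDerivAt (fun y => ∏ j, (y - b j)) Dq z := by
    have h := HasDerivAt.finset_prod
      (fun (i : Fin (n - s)) (_ : i ∈ Finset.univ) => (hasDerivAt_id z).sub_const (b i))
    simpa [hDqdef, Finset.prod_fn] using h
  set Dp : ℂ := c * ((s:ℂ) * z^(s-1)) * Q + (c * z^s) * Dq with hDpdef
  have hPD : HasDerivAt (fun y => c * y^s * ∏ j, (y - b j)) Dp z := by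
    have h1 : HasDerivAt (fun y : ℂ => c * y^s) (c * ((s:ℂ) * z^(s-1))) z :=
      (hasDerivAt_pow s z).const_mul c
    have h := h1.fun_mul hQD
    simpa [hDpdef, hQdef] using h
  set Dr : ℂ := (Dp * W - P * Dw) / W^2 with hDrdef
  have hRD : HasDerivAt r Dr z := by
    have h := HasDerivAt.fun_div hPD hWD hW0
    exact h.congr_of_eventuallyEq (Filter.Eventually.of_forall fun x => by rw [hr x, hp x, hw x])
  have hderiv : deriv r z = Dr := hRD.deriv
  have IW : z * Dw = Sa * W := log_deriv_prod z a hza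
  have IQ : z * Dq = Sb * Q := log_deriv_prod z b hzb
  have hzs : z * ((s:ℂ) * z^(s-1)) = (s:ℂ) * z^s := by
    cases s with
    | zero => simp
    | succ m => rw [Nat.succ_sub_one, pow_succ]; push_cast; ring
  have IP : z * Dp = ((s:ℂ) + Sb) * P := by
    rw [hDpdef, hPdef]
    calc z * (c*((s:ℂ)*z^(s-1))*Q + (c*z^s)*Dq)
        = c * (z * ((s:ℂ)*z^(s-1))) * Q + (c*z^s) * (z*Dq) := by ring
      _ = c * ((s:ℂ)*z^s) * Q + (c*z^s)*(Sb*Q) := by rw [hzs, IQ]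
      _ = ((s:ℂ) + Sb) * (c*z^s*Q) := by ring
  set E : ℂ := (s:ℂ) + Sb - Sa with hEdef
  have hmain : z * Dr = E * (P / W) := by
    have h2 : z * (Dp * W - P * Dw) = E * P * W := by
      calc z * (Dp*W - P*Dw) = (z*Dp)*W - (z*Dw)*P := by ring
        _ = (((s:ℂ)+Sb)*P)*W - (Sa*W)*P := by rw [IP, IW]
        _ = E*P*W := by rw [hEdef]; ring
    rw [hDrdef, ← mul_div_assoc, h2]
    field_simp
  have habsr : ‖r z‖ = ‖P / W‖ := by
    rw [hr z, hp z, hw z]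
  have habsdr : ‖deriv r z‖ = ‖E‖ * ‖r z‖ := by
    rw [hderiv, habsr]
    have h1 : ‖Dr‖ = ‖z * Dr‖ := by rw [norm_mul, hz, one_mul]
    rw [h1, hmain, norm_mul]
  have hre : E.re = (s:ℝ) + (∑ j, (z/(z - b j)).re) - ∑ j, (z/(z - a j)).re := by
    rw [hEdef, hSbdef, hSadef]
    simp [Complex.add_re, Complex.sub_re, Complex.re_sum, Complex.natCast_re]
  have hSa_re : ∑ j, (z/(z - a j)).re = (n:ℝ)/2 - (∑ j, T j)/2 := by
    have h1 : ∀ j ∈ Finset.univ, (z/(z - a j)).re = 1/2 - (T j)/2 := fun j _ =>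
      re_term_pole z (a j) hz (ha j)
    rw [Finset.sum_congr rfl h1, Finset.sum_sub_distrib, Finset.sum_const, Finset.card_univ,
      Fintype.card_fin, ← Finset.sum_div]
    simp [nsmul_eq_mul]
    ring
  have hSb_re : ∑ j, 1/(1 + ‖b j‖) ≤ ∑ j, (z/(z - b j)).re :=
    Finset.sum_le_sum fun j _ => re_term_zero z (b j) hz (le_trans (hb j) hk1) (hzb j)
  rw [ge_iff_le, habsDB, habsdr]
  have hk1' : (1:ℝ) + k ≠ 0 := by linarith
  have hKeq : (1 / 2) * ((∑ j, T j)
        + ((n : ℝ) * (1 - k) + 2 * (s : ℝ) * k) / (1 + k)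
        + 2 * ((∑ j, 1 / (1 + ‖b j‖)) - ((n : ℝ) - (s : ℝ)) / (1 + k)))
      = (s:ℝ) + (∑ j, 1 / (1 + ‖b j‖)) - (n:ℝ)/2 + (∑ j, T j)/2 := by
    field_simp
    ring
  have hKle : (1 / 2) * ((∑ j, T j)
        + ((n : ℝ) * (1 - k) + 2 * (s : ℝ) * k) / (1 + k)
        + 2 * ((∑ j, 1 / (1 + ‖b j‖)) - ((n : ℝ) - (s : ℝ)) / (1 + k)))
      ≤ E.re := by
    rw [hKeq, hre, hSa_re]
    linarith [hSb_re]
  calc (1 / 2) * ((∑ j, T j)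
        + ((n : ℝ) * (1 - k) + 2 * (s : ℝ) * k) / (1 + k)
        + 2 * ((∑ j, 1 / (1 + ‖b j‖)) - ((n : ℝ) - (s : ℝ)) / (1 + k)))
        * ‖r z‖
      ≤ E.re * ‖r z‖ :=
        mul_le_mul_of_nonneg_right hKle (norm_nonneg _)
    _ ≤ ‖E‖ * ‖r z‖ :=
        mul_le_mul_of_nonneg_right (Complex.re_le_norm E) (norm_nonneg _)
end

section
/- Let n ∈ ℕ, let a_1,…,a_n ∈ ℂ with |a_j| > 1 for all j, let w(z) = ∏_{j=1}^n (z − a_j) and let B be the associated Blaschke product. Let 0 < k ≤ 1, let s, m ∈ ℕ with s ≤ m ≤ n, let b_1,…,b_{m−s} ∈ ℂ with |b_j| ≤ k for all j, and let p be the polynomial p(z) = c_s·z^s + c_{s+1}·z^{s+1} + ⋯ + c_m·z^m with c_m ≠ 0 whose zeros are 0 (with multiplicity s) and b_1,…,b_{m−s}, i.e. p(z) = c_m · z^s · ∏_{j=1}^{m−s} (z − b_j); note that |c_s| = |c_m| · ∏_{j=1}^{m−s} |b_j|. Set r(z) = p(z)/w(z). Then for every z ∈ ℂ with |z| = 1,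 |r′(z)| ≥ (1/2) · { |B′(z)| − n + 2(m + s·k)/(1 + k) + (2k/(k + 1)) · ( (k^{m−s}·|c_m| − |c_s|)/(k^{m−s}·|c_m| + |c_s|) ) } · |r(z)|. -/
/-!
On the unit circle `z r' / r = s + ∑ z / (z - b j) - ∑ z / (z - a i)`, so
`‖r'‖ ≥ Re (z r' / r) ‖r‖`. For every `c ≠ z`,
`2 Re (z / (z - c)) = 1 + (‖z‖² - ‖c‖²) / ‖z - c‖²`. Summed over the poles this is
`n - ‖B'(z)‖`, because `‖B(z)‖ = 1` and `z B' / B = ∑ (‖a i‖² - 1) / ‖z - a i‖²` is a positive real.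
For a zero with `‖b‖ ≤ k ≤ 1` it gives `Re (z / (z - b)) ≥ 1 / (1 + ‖b‖)`, which is at least
`1 / (1 + k) + k / (1 + k) * contrast k ‖b‖`. Contrasts `(x - y) / (x + y)` are subadditive
under products, so they add up to at least `contrast (k ^ (m - s)) (∏ ‖b j‖)`, and
`∏ ‖b j‖ = ‖cs‖ / ‖cm‖`.
-/

open Complex ComplexConjugate

noncomputable def contrast (x y : ℝ) : ℝ := (x - y) / (x + y)

theorem contrast_mul_right (x y : ℝ) {c : ℝ} (hc : c ≠ 0) :
    contrast (x * c) (y * c) = contrast x y := by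
  unfold contrast
  rw [← sub_mul, ← add_mul, mul_div_mul_right _ _ hc]

theorem contrast_mul_le_add {x y X Y : ℝ} (hy : 0 ≤ y) (hyx : y ≤ x) (hx : 0 < x)
    (hY : 0 ≤ Y) (hYX : Y ≤ X) (hX : 0 < X) :
    contrast (x * X) (y * Y) ≤ contrast x y + contrast X Y := by
  unfold contrast
  rw [div_add_div _ _ (by positivity) (by positivity), div_le_div_iff₀ (by positivity) (by positivity)]
  nlinarith [mul_nonneg (mul_nonneg (sub_nonneg.2 (mul_le_mul hyx hYX hY hx.le)) (sub_nonneg.2 hyx))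
    (sub_nonneg.2 hYX)]

theorem contrast_prod_le_sum {ι : Type*} (s : Finset ι) {x y : ι → ℝ} (hy : ∀ i ∈ s, 0 ≤ y i)
    (hyx : ∀ i ∈ s, y i ≤ x i) (hx : ∀ i ∈ s, 0 < x i) :
    contrast (∏ i ∈ s, x i) (∏ i ∈ s, y i) ≤ ∑ i ∈ s, contrast (x i) (y i) := by
  induction s using Finset.cons_induction with
  | empty => simp [contrast]
  | cons i s _ ih =>
    simp only [Finset.forall_mem_cons] at hy hyx hx
    rw [Finset.prod_cons, Finset.prod_cons, Finset.sum_cons]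
    refine (contrast_mul_le_add hy.1 hyx.1 hx.1 (Finset.prod_nonneg hy.2)
      (Finset.prod_le_prod hy.2 hyx.2) (Finset.prod_pos hx.2)).trans ?_
    exact add_le_add_right (ih hy.2 hyx.2 hx.2) _

theorem one_div_one_add_add_mul_contrast_le {t k : ℝ} (ht : 0 ≤ t) (htk : t ≤ k) (hk0 : 0 < k) (hk1 : k ≤ 1) :
    1 / (1 + k) + k / (1 + k) * contrast k t ≤ 1 / (1 + t) := by
  unfold contrast
  rw [div_mul_div_comm, div_add_div _ _ (by positivity) (by positivity),
    div_le_div_iff₀ (by positivity) (by positivity)]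
  nlinarith [mul_nonneg (mul_nonneg (sub_nonneg.2 htk) ht) (sub_nonneg.2 hk1)]

theorem two_mul_re_div_sub {z a : ℂ} (h : z ≠ a) :
    2 * (z / (z - a)).re = 1 + (‖z‖ ^ 2 - ‖a‖ ^ 2) / ‖z - a‖ ^ 2 := by
  have hza : normSq (z - a) ≠ 0 := normSq_eq_zero.not.2 (sub_ne_zero.2 h)
  simp only [Complex.sq_norm, div_re]
  field_simp
  simp only [normSq_apply, sub_re, sub_im]
  ring

theorem one_div_one_add_norm_le_re_div_sub {z b : ℂ} (hz : ‖z‖ = 1) (hb : ‖b‖ ≤ 1) (h : z ≠ b) :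
    1 / (1 + ‖b‖) ≤ (z / (z - b)).re := by
  have hd : 0 < ‖z - b‖ := norm_pos_iff.2 (sub_ne_zero.2 h)
  have hd' : ‖z - b‖ ^ 2 ≤ (1 + ‖b‖) ^ 2 := pow_le_pow_left₀ hd.le (hz ▸ norm_sub_le z b) 2
  have hre := two_mul_re_div_sub h
  have : (1 - ‖b‖) / (1 + ‖b‖) ≤ (1 - ‖b‖ ^ 2) / ‖z - b‖ ^ 2 := by
    rw [div_le_div_iff₀ (by positivity) (by positivity)]
    nlinarith [mul_le_mul_of_nonneg_left hd' (sub_nonneg.2 hb)]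
  have h2 : 2 * (1 / (1 + ‖b‖)) = 1 + (1 - ‖b‖) / (1 + ‖b‖) := by field_simp; ring
  rw [hz, one_pow] at hre
  linarith

theorem card_div_add_contrast_le_sum_re {ι : Type*} [Fintype ι] {z : ℂ} {b : ι → ℂ} {k : ℝ}
    (hz : ‖z‖ = 1) (hk0 : 0 < k) (hk1 : k ≤ 1) (hb : ∀ j, ‖b j‖ ≤ k) (hzb : ∀ j, z ≠ b j) :
    Fintype.card ι / (1 + k) + k / (1 + k) * contrast (k ^ Fintype.card ι) (∏ j, ‖b j‖)
      ≤ ∑ j, (z / (z - b j)).re := by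
  have hcontrast : contrast (k ^ Fintype.card ι) (∏ j, ‖b j‖) ≤ ∑ j, contrast k ‖b j‖ := by
    rw [← Finset.card_univ, ← Finset.prod_const]
    exact contrast_prod_le_sum _ (fun j _ => norm_nonneg _) (fun j _ => hb j) fun _ _ => hk0
  calc _ ≤ ∑ j, (1 / (1 + k) + k / (1 + k) * contrast k ‖b j‖) := by
        rw [Finset.sum_add_distrib, ← Finset.mul_sum, Finset.sum_const, Finset.card_univ,
          nsmul_eq_mul, mul_one_div]
        gcongr
    _ ≤ ∑ j, 1 / (1 + ‖b j‖) :=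
        Finset.sum_le_sum fun j _ => one_div_one_add_add_mul_contrast_le (norm_nonneg _) (hb j) hk0 hk1
    _ ≤ _ := Finset.sum_le_sum fun j _ =>
        one_div_one_add_norm_le_re_div_sub hz ((hb j).trans hk1) (hzb j)

theorem two_mul_sum_re_div_sub {ι : Type*} [Fintype ι] {z : ℂ} {a : ι → ℂ} (hz : ‖z‖ = 1)
    (hza : ∀ i, z ≠ a i) :
    2 * ∑ i, (z / (z - a i)).re = Fintype.card ι - ∑ i, (‖a i‖ ^ 2 - 1) / ‖z - a i‖ ^ 2 := by
  rw [Finset.mul_sum, Finset.sum_congr rfl fun i _ => two_mul_re_div_sub (hza i),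
    Finset.sum_add_distrib, Finset.sum_const, Finset.card_univ, nsmul_one, sub_eq_add_neg,
    ← Finset.sum_neg_distrib]
  simp only [hz, one_pow, ← neg_div, neg_sub]

theorem one_sub_conj_mul_eq {z : ℂ} (hz : ‖z‖ = 1) (a : ℂ) : 1 - conj a * z = z * conj (z - a) := by
  have : z * conj z = 1 := by rw [mul_conj', hz]; simp
  rw [map_sub, mul_sub, this]
  ring

theorem mul_logDeriv_blaschkeFactor {z a : ℂ} (hz : ‖z‖ = 1) (h : z ≠ a) :
    z * logDeriv (fun y => (1 - conj a * y) / (y - a)) z = ((‖a‖ ^ 2 - 1) / ‖z - a‖ ^ 2 : ℝ) := by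
  have hza : z - a ≠ 0 := sub_ne_zero.2 h
  have hz0 : z ≠ 0 := by rintro rfl; simp at hz
  have hconj : conj (z - a) ≠ 0 := (map_ne_zero _).2 hza
  have hnum : 1 - conj a * z ≠ 0 := by
    rw [one_sub_conj_mul_eq hz]; exact mul_ne_zero hz0 hconj
  have hderiv : deriv (fun y => 1 - conj a * y) z = -conj a := by
    rw [(((hasDerivAt_id' z).const_mul (conj a)).const_sub 1).deriv, mul_one]
  have hzz : z * conj z = 1 := by rw [mul_conj', hz]; simp
  rw [logDeriv_div z hnum hza (by fun_prop) (by fun_prop)]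
  rw [logDeriv_apply, logDeriv_apply, hderiv, deriv_sub_const, deriv_id'', one_sub_conj_mul_eq hz,
    Complex.ofReal_div, Complex.ofReal_sub, Complex.ofReal_pow, Complex.ofReal_pow, ← mul_conj',
    ← mul_conj']
  field_simp
  push_cast [map_sub]
  linear_combination -hzz

theorem norm_deriv_eq_norm_mul_logDeriv {f : ℂ → ℂ} {z : ℂ} (hz : ‖z‖ = 1) (hf : f z ≠ 0) :
    ‖deriv f z‖ = ‖z * logDeriv f z‖ * ‖f z‖ := by
  rw [logDeriv_apply, norm_mul, hz, one_mul, norm_div, div_mul_cancel₀ _ (norm_ne_zero_iff.2 hf)]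

theorem norm_deriv_blaschke {ι : Type*} [Fintype ι] {z : ℂ} {a : ι → ℂ} (hz : ‖z‖ = 1)
    (ha : ∀ i, 1 < ‖a i‖) :
    ‖deriv (fun y => ∏ i, (1 - conj (a i) * y) / (y - a i)) z‖
      = ∑ i, (‖a i‖ ^ 2 - 1) / ‖z - a i‖ ^ 2 := by
  have hza : ∀ i, z ≠ a i := fun i h => (ha i).ne' (h ▸ hz)
  have hnorm : ∀ i, ‖(1 - conj (a i) * z) / (z - a i)‖ = 1 := fun i => by
    rw [one_sub_conj_mul_eq hz, norm_div, norm_mul, hz, one_mul, norm_conj,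
      div_self (norm_ne_zero_iff.2 (sub_ne_zero.2 (hza i)))]
  have hB : ∏ i, (1 - conj (a i) * z) / (z - a i) ≠ 0 :=
    Finset.prod_ne_zero_iff.2 fun i _ => norm_ne_zero_iff.1 ((hnorm i).trans_ne one_ne_zero)
  rw [norm_deriv_eq_norm_mul_logDeriv hz hB, norm_prod, Finset.prod_eq_one fun i _ => hnorm i,
    mul_one, logDeriv_prod (fun i _ => Finset.prod_ne_zero_iff.1 hB i (Finset.mem_univ i))
      (fun i _ => by fun_prop (disch := exact sub_ne_zero.2 (hza i))), Finset.mul_sum,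
    Finset.sum_congr rfl fun i _ => mul_logDeriv_blaschkeFactor hz (hza i), ← Complex.ofReal_sum,
    Complex.norm_real, Real.norm_of_nonneg]
  refine Finset.sum_nonneg fun i _ => div_nonneg ?_ (sq_nonneg _)
  nlinarith [ha i]

theorem logDeriv_prod_sub {ι : Type*} (s : Finset ι) {z : ℂ} {a : ι → ℂ} (hza : ∀ i ∈ s, z ≠ a i) :
    logDeriv (fun y => ∏ i ∈ s, (y - a i)) z = ∑ i ∈ s, 1 / (z - a i) := by
  rw [logDeriv_prod (fun i hi => sub_ne_zero.2 (hza i hi)) fun i _ => by fun_prop]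
  simp [logDeriv_apply]

theorem mul_logDeriv_monomial_mul_prod_div_prod {ι κ : Type*} [Fintype ι] [Fintype κ] {z c : ℂ}
    (hc : c ≠ 0) (s : ℕ) {b : ι → ℂ} {a : κ → ℂ} (hz : z ≠ 0) (hzb : ∀ j, z ≠ b j)
    (hza : ∀ i, z ≠ a i) :
    z * logDeriv (fun y => c * y ^ s * (∏ j, (y - b j)) / ∏ i, (y - a i)) z
      = s + ∑ j, z / (z - b j) - ∑ i, z / (z - a i) := by
  have hb0 : ∏ j, (z - b j) ≠ 0 := Finset.prod_ne_zero_iff.2 fun j _ => sub_ne_zero.2 (hzb j)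
  have ha0 : ∏ i, (z - a i) ≠ 0 := Finset.prod_ne_zero_iff.2 fun i _ => sub_ne_zero.2 (hza i)
  rw [logDeriv_div z (by simp [hc, hz, hb0]) ha0 (by fun_prop) (by fun_prop),
    logDeriv_mul z (by simp [hc, hz]) hb0 (by fun_prop) (by fun_prop),
    logDeriv_const_mul z c hc, logDeriv_pow, logDeriv_prod_sub _ fun j _ => hzb j,
    logDeriv_prod_sub _ fun i _ => hza i, mul_sub, mul_add, Finset.mul_sum, Finset.mul_sum,
    mul_div_cancel₀ _ hz]
  simp only [mul_one_div]

theorem turan_rational_sfold_zeros_coeff_general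
    (n : ℕ) (a : Fin n → ℂ) (ha : ∀ j, 1 < ‖a j‖)
    (w B : ℂ → ℂ)
    (hw : ∀ z, w z = ∏ j, (z - a j))
    (hB : ∀ z, B z = ∏ j, (1 - (starRingEnd ℂ) (a j) * z) / (z - a j))
    (k : ℝ) (hk0 : 0 < k) (hk1 : k ≤ 1)
    (s m : ℕ) (hsm : s ≤ m)
    (cm : ℂ)
    (b : Fin (m - s) → ℂ) (hb : ∀ j, ‖b j‖ ≤ k)
    (p r : ℂ → ℂ)
    (hp : ∀ z, p z = cm * z ^ s * ∏ j, (z - b j))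
    (hr : ∀ z, r z = p z / w z)
    (cs : ℂ) (hcs : cs = cm * ∏ j, (-(b j)))
    (z : ℂ) (hz : ‖z‖ = 1) :
    ‖deriv r z‖ ≥
      (1 / 2) * (‖deriv B z‖ - (n : ℝ)
        + 2 * ((m : ℝ) + (s : ℝ) * k) / (1 + k)
        + (2 * k / (k + 1)) *
          ((k ^ (m - s) * ‖cm‖ - ‖cs‖) /
            (k ^ (m - s) * ‖cm‖ + ‖cs‖)))
        * ‖r z‖ := by
  by_cases hrz : r z = 0
  · rw [hrz, norm_zero, mul_zero]
    exact norm_nonneg _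
  have hz0 : z ≠ 0 := by rintro rfl; simp at hz
  have hpz : cm * z ^ s * ∏ j, (z - b j) ≠ 0 := fun h => hrz (by rw [hr, hp, h, zero_div])
  have hcm : cm ≠ 0 := left_ne_zero_of_mul (left_ne_zero_of_mul hpz)
  have hzb : ∀ j, z ≠ b j := fun j h =>
    hpz (by rw [Finset.prod_eq_zero (Finset.mem_univ j) (sub_eq_zero.2 h), mul_zero])
  have hza : ∀ i, z ≠ a i := fun i h => (ha i).ne' (h ▸ hz)
  have hr' : r = fun y => cm * y ^ s * (∏ j, (y - b j)) / ∏ i, (y - a i) :=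
    funext fun y => by rw [hr, hp, hw]
  have hpoles := two_mul_sum_re_div_sub hz hza
  have hzeros := card_div_add_contrast_le_sum_re hz hk0 hk1 hb hzb
  rw [Fintype.card_fin] at hpoles
  rw [Fintype.card_fin, Nat.cast_sub hsm] at hzeros
  have hcontrast : (k ^ (m - s) * ‖cm‖ - ‖cs‖) / (k ^ (m - s) * ‖cm‖ + ‖cs‖)
      = contrast (k ^ (m - s)) (∏ j, ‖b j‖) := by
    rw [← contrast_mul_right _ _ (norm_ne_zero_iff.2 hcm), hcs, norm_mul, norm_prod, mul_comm ‖cm‖,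
      contrast]
    simp only [norm_neg]
  have hfrac : 2 * ((m : ℝ) + s * k) / (1 + k) = 2 * s + 2 * ((m - s) / (1 + k)) := by
    field_simp
    ring
  have hcoef : 2 * k / (k + 1) = 2 * (k / (1 + k)) := by ring
  rw [ge_iff_le, norm_deriv_eq_norm_mul_logDeriv hz hrz, funext hB, norm_deriv_blaschke hz ha]
  refine mul_le_mul_of_nonneg_right (le_trans ?_ (re_le_norm _)) (norm_nonneg _)
  rw [hr', mul_logDeriv_monomial_mul_prod_div_prod hcm s hz0 hzb hza, hcontrast, hfrac, hcoef]
  simp only [sub_re, add_re, natCast_re, re_sum]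
  linarith

theorem turan_rational_sfold_zeros_coeff
    (n : ℕ) (a : Fin n → ℂ) (ha : ∀ j, 1 < ‖a j‖)
    (w B : ℂ → ℂ)
    (hw : ∀ z, w z = ∏ j, (z - a j))
    (hB : ∀ z, B z = ∏ j, (1 - (starRingEnd ℂ) (a j) * z) / (z - a j))
    (k : ℝ) (hk0 : 0 < k) (hk1 : k ≤ 1)
    (s m : ℕ) (hsm : s ≤ m) (hmn : m ≤ n)
    (cm : ℂ) (hcm : cm ≠ 0)
    (b : Fin (m - s) → ℂ) (hb : ∀ j, ‖b j‖ ≤ k)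
    (p r : ℂ → ℂ)
    (hp : ∀ z, p z = cm * z ^ s * ∏ j, (z - b j))
    (hr : ∀ z, r z = p z / w z)
    (cs : ℂ) (hcs : cs = cm * ∏ j, (-(b j)))
    (z : ℂ) (hz : ‖z‖ = 1) :
    ‖deriv r z‖ ≥
      (1 / 2) * (‖deriv B z‖ - (n : ℝ)
        + 2 * ((m : ℝ) + (s : ℝ) * k) / (1 + k)
        + (2 * k / (k + 1)) *
          ((k ^ (m - s) * ‖cm‖ - ‖cs‖) /
            (k ^ (m - s) * ‖cm‖ + ‖cs‖)))
        * ‖r z‖ :=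
  turan_rational_sfold_zeros_coeff_general n a ha w B hw hB k hk0 hk1 s m hsm cm b hb p r hp hr cs
    hcs z hz
end

section
/- Let n ∈ ℕ, let a_1,…,a_n ∈ ℂ with |a_j| > 1 for all j, let w(z) = ∏_{j=1}^n (z − a_j) and let B be the associated Blaschke product. Let 0 < k ≤ 1, let m ∈ ℕ with m ≤ n, let b_1,…,b_m ∈ ℂ with |b_j| ≤ k for all j, and let p(z) = c_0 + c_1·z + ⋯ + c_m·z^m with c_m ≠ 0 be a polynomial whose zeros are exactly b_1,…,b_m, i.e. p(z) = c_m · ∏_{j=1}^m (z − b_j); note that |c_0| = |c_m| · ∏_{j=1}^m |b_j|. Set r(z) = p(z)/w(z). Then for every z ∈ ℂ with |z| = 1, |r′(z)| ≥ (1/2) · { |B′(z)| − n + 2m/(1 + k) + (2k/(k + 1)) · ( (k^m·|c_m| − |c_0|)/(k^m·|c_m| + |c_0|) ) } · |r(z)|. -/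
open Complex Finset

private lemma turan_gmul (u v : ℝ) (hu0 : 0 ≤ u) (hu1 : u ≤ 1) (hv0 : 0 ≤ v) (hv1 : v ≤ 1) :
    (1 - u*v)/(1 + u*v) ≤ (1-u)/(1+u) + (1-v)/(1+v) := by
  have huv : u * v ≤ 1 := mul_le_one₀ hu1 hv0 hv1
  rw [div_add_div _ _ (by positivity) (by positivity),
    div_le_div_iff₀ (by positivity) (by positivity)]
  nlinarith [mul_nonneg (mul_nonneg (sub_nonneg.2 huv) (sub_nonneg.2 hu1)) (sub_nonneg.2 hv1)]

private lemma turan_gprod {ι : Type*} [DecidableEq ι] (s : Finset ι) (y : ι → ℝ)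
    (h0 : ∀ i ∈ s, 0 ≤ y i) (h1 : ∀ i ∈ s, y i ≤ 1) :
    (1 - ∏ i ∈ s, y i)/(1 + ∏ i ∈ s, y i) ≤ ∑ i ∈ s, (1 - y i)/(1 + y i) := by
  induction s using Finset.induction with
  | empty => simp
  | @insert a s hnotmem ih =>
    have h0a := h0 a (mem_insert_self a s)
    have h1a := h1 a (mem_insert_self a s)
    have h0' : ∀ i ∈ s, 0 ≤ y i := fun i hi => h0 i (mem_insert_of_mem hi)
    have h1' : ∀ i ∈ s, y i ≤ 1 := fun i hi => h1 i (mem_insert_of_mem hi)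
    have hP0 : 0 ≤ ∏ i ∈ s, y i := Finset.prod_nonneg h0'
    have hP1 : ∏ i ∈ s, y i ≤ 1 := Finset.prod_le_one h0' h1'
    rw [Finset.prod_insert hnotmem, Finset.sum_insert hnotmem]
    calc (1 - y a * ∏ i ∈ s, y i)/(1 + y a * ∏ i ∈ s, y i)
        ≤ (1 - y a)/(1 + y a) + (1 - ∏ i ∈ s, y i)/(1 + ∏ i ∈ s, y i) :=
          turan_gmul _ _ h0a h1a hP0 hP1
      _ ≤ (1 - y a)/(1 + y a) + ∑ i ∈ s, (1 - y i)/(1 + y i) := by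
          linarith [ih h0' h1']

private lemma turan_per_term (k x : ℝ) (hk0 : 0 < k) (hk1 : k ≤ 1) (hx0 : 0 ≤ x) (hxk : x ≤ k) :
    1/(1+k) + (k/(1+k)) * ((1 - x/k)/(1 + x/k)) ≤ 1/(1+x) := by
  have h1 : (1 - x/k)/(1 + x/k) = (k - x)/(k + x) := by
    rw [div_eq_div_iff (by positivity) (by positivity)]
    field_simp
  rw [h1, div_mul_div_comm, div_add_div _ _ (by positivity) (by positivity),
    div_le_div_iff₀ (by positivity) (by positivity)]
  nlinarith [mul_nonneg (mul_nonneg (sub_nonneg.2 hxk) hx0) (sub_nonneg.2 hk1)]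

private lemma sum_inv_bound (m : ℕ) (k : ℝ) (hk0 : 0 < k) (hk1 : k ≤ 1) (x : Fin m → ℝ)
    (hx0 : ∀ j, 0 ≤ x j) (hxk : ∀ j, x j ≤ k) :
    (m : ℝ)/(1+k) + (k/(1+k)) * ((k^m - ∏ j, x j)/(k^m + ∏ j, x j)) ≤ ∑ j, 1/(1+x j) := by
  have ht0 : 0 ≤ ∏ j, x j := Finset.prod_nonneg fun j _ => hx0 j
  have hkm : (0:ℝ) < k^m := by positivity
  set y : Fin m → ℝ := fun j => x j / k with hy
  have hy0 : ∀ j ∈ Finset.univ (α := Fin m), 0 ≤ y j := fun j _ =>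
    div_nonneg (hx0 j) hk0.le
  have hy1 : ∀ j ∈ Finset.univ (α := Fin m), y j ≤ 1 := fun j _ =>
    div_le_one_of_le₀ (hxk j) hk0.le
  have hs0 : 0 ≤ ∏ j, y j := Finset.prod_nonneg hy0
  have hprod : ∏ j, y j = (∏ j, x j) / k^m := by
    rw [hy]; rw [Finset.prod_div_distrib, Finset.prod_const, Finset.card_univ, Fintype.card_fin]
  have hQ : (k^m - ∏ j, x j)/(k^m + ∏ j, x j) = (1 - ∏ j, y j)/(1 + ∏ j, y j) := by
    rw [hprod, div_eq_div_iff (by linarith) (by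
      have : 0 ≤ (∏ j, x j)/k^m := div_nonneg ht0 hkm.le
      linarith)]
    field_simp
  rw [hQ]
  have key := turan_gprod Finset.univ y hy0 hy1
  calc (m : ℝ)/(1+k) + (k/(1+k)) * ((1 - ∏ j, y j)/(1 + ∏ j, y j))
      ≤ (m : ℝ)/(1+k) + (k/(1+k)) * ∑ j, (1 - y j)/(1 + y j) := by
        have h : (0:ℝ) ≤ k/(1+k) := by positivity
        nlinarith [key]
    _ = ∑ j, (1/(1+k) + (k/(1+k)) * ((1 - y j)/(1 + y j))) := by
        rw [Finset.sum_add_distrib, Finset.mul_sum, Finset.sum_const, Finset.card_univ,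
          Fintype.card_fin]
        ring
    _ ≤ ∑ j, 1/(1+x j) := Finset.sum_le_sum fun j _ =>
        turan_per_term k (x j) hk0 hk1 (hx0 j) (hxk j)

private lemma re_div_ge (z bj : ℂ) (hz : ‖z‖ = 1) (hb1 : ‖bj‖ ≤ 1)
    (hne : z - bj ≠ 0) : 1/(1 + ‖bj‖) ≤ (z / (z - bj)).re := by
  set β := ‖bj‖ with hβ
  have hβ0 : 0 ≤ β := norm_nonneg bj
  have hnz : Complex.normSq z = 1 := by
    rw [← Complex.sq_norm, hz]; norm_num
  set u := (z * (starRingEnd ℂ) bj).re with hu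
  have hD : Complex.normSq (z - bj) = 1 + β^2 - 2*u := by
    rw [Complex.normSq_sub, hnz, ← Complex.sq_norm]
  have hD0 : 0 < Complex.normSq (z - bj) := Complex.normSq_pos.2 hne
  have hure : (z / (z - bj)).re = (1 - u) / Complex.normSq (z - bj) := by
    rw [Complex.div_re, ← add_div]
    congr 1
    have h1 : z.re * z.re + z.im * z.im = 1 := by rw [← Complex.normSq_apply, hnz]
    simp only [hu, Complex.sub_re, Complex.sub_im, Complex.mul_re, Complex.conj_re, Complex.conj_im]
    linear_combination h1
  have habs : |u| ≤ β := by
    calc |u| ≤ ‖z * (starRingEnd ℂ) bj‖ := Complex.abs_re_le_norm _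
      _ = β := by rw [norm_mul, hz, Complex.norm_conj, one_mul]
  rw [hure, hD]
  rw [div_le_div_iff₀ (by positivity) (by rw [← hD]; exact hD0)]
  nlinarith [abs_le.1 habs,
    mul_nonneg (sub_nonneg.2 hb1) (by linarith [(abs_le.1 habs).1] : (0:ℝ) ≤ β + u)]

private lemma re_div_eq (z aj : ℂ) (hz : ‖z‖ = 1) (hne : z - aj ≠ 0) :
    (z / (z - aj)).re = 1/2 - (Complex.normSq aj - 1)/(2 * Complex.normSq (z - aj)) := by
  have hnz : Complex.normSq z = 1 := by
    rw [← Complex.sq_norm, hz]; norm_num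
  set u := (z * (starRingEnd ℂ) aj).re with hu
  have hD : Complex.normSq (z - aj) = 1 + Complex.normSq aj - 2*u := by
    rw [Complex.normSq_sub, hnz]
  have hD0 : 0 < Complex.normSq (z - aj) := Complex.normSq_pos.2 hne
  have hure : (z / (z - aj)).re = (1 - u) / Complex.normSq (z - aj) := by
    rw [Complex.div_re, ← add_div]
    congr 1
    have h1 : z.re * z.re + z.im * z.im = 1 := by rw [← Complex.normSq_apply, hnz]
    simp only [hu, Complex.sub_re, Complex.sub_im, Complex.mul_re, Complex.conj_re, Complex.conj_im]
    linear_combination h1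
  rw [hure]
  rw [eq_sub_iff_add_eq, div_add_div _ _ (ne_of_gt hD0) (by positivity),
    div_eq_div_iff (by positivity) (by norm_num)]
  ring_nf
  nlinarith [hD]

private lemma abs_one_sub_conj_mul (z aj : ℂ) (hz : ‖z‖ = 1) :
    ‖1 - (starRingEnd ℂ) aj * z‖ = ‖z - aj‖ := by
  have h : 1 - (starRingEnd ℂ) aj * z = z * (starRingEnd ℂ) (z - aj) := by
    have hnz : ((Complex.normSq z : ℝ) : ℂ) = 1 := by
      rw [← Complex.sq_norm, hz]; norm_num
    rw [map_sub, mul_sub, Complex.mul_conj, hnz]; ring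
  rw [h, norm_mul, hz, one_mul, Complex.norm_conj]

private lemma hasDerivAt_blaschke (z aj : ℂ) (hne : z - aj ≠ 0) :
    HasDerivAt (fun x => (1 - (starRingEnd ℂ) aj * x) / (x - aj))
      (((starRingEnd ℂ) aj * aj - 1) / (z - aj)^2) z := by
  have hnum : HasDerivAt (fun x : ℂ => 1 - (starRingEnd ℂ) aj * x) (-(starRingEnd ℂ) aj) z := by
    simpa using ((hasDerivAt_id z).const_mul ((starRingEnd ℂ) aj)).const_sub 1
  have hden : HasDerivAt (fun x : ℂ => x - aj) 1 z := (hasDerivAt_id z).sub_const aj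
  have h := hnum.fun_div hden hne
  refine h.congr_deriv ?_
  ring

theorem turan_rational_zeros_coeff
    (n : ℕ) (a : Fin n → ℂ) (ha : ∀ j, 1 < ‖a j‖)
    (w B : ℂ → ℂ)
    (hw : ∀ z, w z = ∏ j, (z - a j))
    (hB : ∀ z, B z = ∏ j, (1 - (starRingEnd ℂ) (a j) * z) / (z - a j))
    (k : ℝ) (hk0 : 0 < k) (hk1 : k ≤ 1)
    (m : ℕ) (hmn : m ≤ n)
    (cm : ℂ) (hcm : cm ≠ 0)
    (b : Fin m → ℂ) (hb : ∀ j, ‖b j‖ ≤ k)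
    (p r : ℂ → ℂ)
    (hp : ∀ z, p z = cm * ∏ j, (z - b j))
    (hr : ∀ z, r z = p z / w z)
    (c0 : ℂ) (hc0 : c0 = cm * ∏ j, (-(b j)))
    (z : ℂ) (hz : ‖z‖ = 1) :
    ‖deriv r z‖ ≥
      (1 / 2) * (‖deriv B z‖ - (n : ℝ)
        + 2 * (m : ℝ) / (1 + k)
        + (2 * k / (k + 1)) *
          ((k ^ m * ‖cm‖ - ‖c0‖) /
            (k ^ m * ‖cm‖ + ‖c0‖)))
        * ‖r z‖ := by
  -- basic nonvanishing facts
  have hza : ∀ j, z - a j ≠ 0 := by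
    intro j h
    rw [sub_eq_zero] at h
    have := ha j
    rw [← h, hz] at this
    exact absurd this (by norm_num)
  have hwz : w z ≠ 0 := by
    rw [hw]; exact Finset.prod_ne_zero_iff.2 fun j _ => hza j
  -- the quantities d j
  set d : Fin n → ℝ := fun j => (Complex.normSq (a j) - 1) / Complex.normSq (z - a j) with hd
  have hd0 : ∀ j, 0 ≤ d j := by
    intro j
    have h1 : 1 < Complex.normSq (a j) := by
      have := ha j
      rw [← Complex.sq_norm]
      nlinarith [this]
    exact div_nonneg (by linarith) (Complex.normSq_nonneg _)
  -- Blaschke derivative bound : |B'(z)| ≤ ∑ d j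
  have hBd : ‖deriv B z‖ ≤ ∑ j, d j := by
    have hBf : B = fun x => ∏ j, (1 - (starRingEnd ℂ) (a j) * x) / (x - a j) := funext hB
    have hder : HasDerivAt B (∑ j, (∏ i ∈ Finset.univ.erase j,
        (1 - (starRingEnd ℂ) (a i) * z) / (z - a i)) •
        (((starRingEnd ℂ) (a j) * a j - 1) / (z - a j)^2)) z := by
      rw [hBf]
      exact HasDerivAt.fun_finsetProd fun i _ => hasDerivAt_blaschke z (a i) (hza i)
    rw [hder.deriv]
    refine le_trans (norm_sum_le _ _) (le_of_eq (Finset.sum_congr rfl fun j _ => ?_))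
    rw [smul_eq_mul, norm_mul, norm_prod]
    have h1 : ∏ i ∈ Finset.univ.erase j,
        ‖(1 - (starRingEnd ℂ) (a i) * z) / (z - a i)‖ = 1 := by
      refine Finset.prod_eq_one fun i _ => ?_
      rw [norm_div, abs_one_sub_conj_mul z (a i) hz, div_self (norm_ne_zero_iff.mpr (hza i))]
    rw [h1, one_mul, norm_div, norm_pow, Complex.sq_norm]
    congr 1
    have h2 : (starRingEnd ℂ) (a j) * a j - 1 = ((Complex.normSq (a j) - 1 : ℝ) : ℂ) := by
      rw [mul_comm, Complex.mul_conj]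
      push_cast
      ring
    rw [h2, Complex.norm_real, Real.norm_eq_abs]
    have h3 : 1 < Complex.normSq (a j) := by
      have := ha j
      rw [← Complex.sq_norm]
      nlinarith [this]
    exact abs_of_nonneg (by linarith)
  -- trivial case r z = 0
  by_cases hrz : r z = 0
  · rw [hrz, norm_zero, mul_zero]
    exact norm_nonneg _
  -- main case
  have hpz : p z ≠ 0 := by
    intro h
    exact hrz (by rw [hr, h, zero_div])
  have hbz : ∀ j, z - b j ≠ 0 := by
    intro j
    have : (∏ i, (z - b i)) ≠ 0 := by
      intro h
      exact hpz (by rw [hp, h, mul_zero])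
    exact Finset.prod_ne_zero_iff.1 this j (mem_univ j)
  -- derivatives of p and w
  have hpder : HasDerivAt p (cm * ∑ j, ∏ i ∈ Finset.univ.erase j, (z - b i)) z := by
    rw [funext hp]
    have h := HasDerivAt.fun_finsetProd (u := Finset.univ)
      (f := fun (i : Fin m) x => x - b i) (f' := fun _ => 1)
      (fun i _ => (hasDerivAt_id z).sub_const (b i))
    have h2 := h.const_mul cm
    simpa [Finset.mul_sum] using h2
  have hwder : HasDerivAt w (∑ j, ∏ i ∈ Finset.univ.erase j, (z - a i)) z := by
    rw [funext hw]
    have h := HasDerivAt.fun_finsetProd (u := Finset.univ)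
      (f := fun (i : Fin n) x => x - a i) (f' := fun _ => 1)
      (fun i _ => (hasDerivAt_id z).sub_const (a i))
    simpa using h
  have hrder : HasDerivAt r ((deriv p z * w z - p z * deriv w z) / (w z)^2) z := by
    rw [funext hr]
    rw [hpder.deriv, hwder.deriv]
    exact (hpder.div hwder hwz)
  -- logarithmic derivative identities
  set P' := cm * ∑ j, ∏ i ∈ Finset.univ.erase j, (z - b i) with hP'
  set W' := ∑ j, ∏ i ∈ Finset.univ.erase j, (z - a i) with hW'
  have hprodb : (∏ i, (z - b i)) ≠ 0 := Finset.prod_ne_zero_iff.2 fun i _ => hbz i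
  have hzp : z * P' / p z = ∑ j, z / (z - b j) := by
    rw [hp, hP']
    rw [show z * (cm * ∑ j, ∏ i ∈ Finset.univ.erase j, (z - b i))
        = cm * (z * ∑ j, ∏ i ∈ Finset.univ.erase j, (z - b i)) by ring,
      mul_div_mul_left _ _ hcm, Finset.mul_sum, Finset.sum_div]
    refine Finset.sum_congr rfl fun j _ => ?_
    rw [div_eq_div_iff hprodb (hbz j), ← Finset.prod_erase_mul Finset.univ _ (mem_univ j)]
    ring
  have hzw : z * W' / w z = ∑ j, z / (z - a j) := by
    rw [hw, hW', Finset.mul_sum, Finset.sum_div]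
    refine Finset.sum_congr rfl fun j _ => ?_
    rw [div_eq_div_iff (Finset.prod_ne_zero_iff.2 fun i _ => hza i) (hza j),
      ← Finset.prod_erase_mul Finset.univ _ (mem_univ j)]
    ring
  have hdr : deriv r z = (P' * w z - p z * W') / (w z)^2 := by
    rw [hrder.deriv, hpder.deriv, hwder.deriv]
  have hT : z * deriv r z / r z = (∑ j, z / (z - b j)) - (∑ j, z / (z - a j)) := by
    rw [hdr, hr z, ← hzp, ← hzw]
    field_simp
  have hreT : (z * deriv r z / r z).re
      = (∑ j, (z / (z - b j)).re) - (∑ j, (z / (z - a j)).re) := by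
    rw [hT, Complex.sub_re, Complex.re_sum, Complex.re_sum]
  set x : Fin m → ℝ := fun j => ‖b j‖ with hx
  have hx0 : ∀ j, 0 ≤ x j := fun j => norm_nonneg _
  have hsum_b : ∑ j, (1:ℝ)/(1 + x j) ≤ ∑ j, (z / (z - b j)).re :=
    Finset.sum_le_sum fun j _ => re_div_ge z (b j) hz ((hb j).trans hk1) (hbz j)
  have hsum_a : ∑ j, (z / (z - a j)).re = (n : ℝ)/2 - (∑ j, d j)/2 := by
    rw [Finset.sum_congr rfl fun j _ => re_div_eq z (a j) hz (hza j)]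
    have hdj : ∀ j, (Complex.normSq (a j) - 1)/(2 * Complex.normSq (z - a j)) = d j / 2 := by
      intro j
      rw [hd]
      rw [div_div, mul_comm (Complex.normSq (z - a j)) 2]
    rw [Finset.sum_congr rfl fun j _ => by rw [hdj j]]
    rw [Finset.sum_sub_distrib, Finset.sum_const, Finset.card_univ, Fintype.card_fin,
      ← Finset.sum_div, nsmul_eq_mul]
    ring
  have htt : ‖c0‖ = ‖cm‖ * ∏ j, x j := by
    rw [hc0, norm_mul, norm_prod]
    congr 1
    exact Finset.prod_congr rfl fun j _ => norm_neg (b j)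
  have hQ : (k^m * ‖cm‖ - ‖c0‖)/(k^m * ‖cm‖ + ‖c0‖)
      = (k^m - ∏ j, x j)/(k^m + ∏ j, x j) := by
    have hA : ‖cm‖ ≠ 0 := norm_ne_zero_iff.mpr hcm
    rw [htt,
      show k^m * ‖cm‖ - ‖cm‖ * ∏ j, x j
        = ‖cm‖ * (k^m - ∏ j, x j) by ring,
      show k^m * ‖cm‖ + ‖cm‖ * ∏ j, x j
        = ‖cm‖ * (k^m + ∏ j, x j) by ring,
      mul_div_mul_left _ _ hA]
  have hkey := sum_inv_bound m k hk0 hk1 x hx0 (fun j => hb j)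
  have hReT : (m:ℝ)/(1+k) + (k/(1+k)) * ((k^m - ∏ j, x j)/(k^m + ∏ j, x j))
      - (n:ℝ)/2 + (∑ j, d j)/2 ≤ (z * deriv r z / r z).re := by
    rw [hreT, hsum_a]
    linarith [hkey, hsum_b]
  have hfac : (1/2) * (‖deriv B z‖ - (n:ℝ) + 2*(m:ℝ)/(1+k)
      + (2*k/(k+1)) * ((k^m * ‖cm‖ - ‖c0‖)/(k^m * ‖cm‖ + ‖c0‖)))
      ≤ (z * deriv r z / r z).re := by
    rw [hQ]
    have e1 : (2:ℝ)*(m:ℝ)/(1+k) = 2*((m:ℝ)/(1+k)) := by ring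
    have e2 : (2*k/(k+1)) * ((k^m - ∏ j, x j)/(k^m + ∏ j, x j))
        = 2*((k/(1+k)) * ((k^m - ∏ j, x j)/(k^m + ∏ j, x j))) := by
      rw [add_comm k 1]; ring
    rw [e1, e2]
    linarith [hBd, hReT]
  rw [ge_iff_le]
  calc (1/2) * (‖deriv B z‖ - (n:ℝ) + 2*(m:ℝ)/(1+k)
      + (2*k/(k+1)) * ((k^m * ‖cm‖ - ‖c0‖)/(k^m * ‖cm‖ + ‖c0‖)))
      * ‖r z‖
      ≤ (z * deriv r z / r z).re * ‖r z‖ :=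
        mul_le_mul_of_nonneg_right hfac (norm_nonneg _)
    _ ≤ ‖z * deriv r z / r z‖ * ‖r z‖ :=
        mul_le_mul_of_nonneg_right (Complex.re_le_norm _) (norm_nonneg _)
    _ = ‖z * deriv r z / r z * r z‖ := (norm_mul _ _).symm
    _ = ‖deriv r z‖ := by
        rw [div_mul_cancel₀ _ hrz, norm_mul, hz, one_mul]
end

section
/- Let 0 < k ≤ 1, let n ∈ ℕ and s ∈ ℕ with s ≤ n, and let p be a complex polynomial of degree exactly n all of whose zeros lie in the closed disk {z : |z| ≤ k}, having a zero of multiplicity (at least) s at the origin; write p(z) = c_s·z^s + c_{s+1}·z^{s+1} + ⋯ + c_n·z^n with c_n ≠ 0. Then for every z ∈ ℂ with |z| = 1, |p′(z)| ≥ (n/(k + 1)) · { 1 + s·k/n + (k/n) · ( (k^{n−s}·|c_n| − |c_s|)/(k^{n−s}·|c_n| + |c_s|) ) } · |p(z)|. -/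
open Complex Polynomial



/-- sum of re's -/
lemma multiset_re_sum (T : Multiset ℂ) : T.sum.re = (T.map Complex.re).sum := by
  induction T using Multiset.induction_on with
  | empty => simp
  | cons a T ih => simp [ih]

lemma multiset_sum_le_sum {T : Multiset ℝ} {f g : ℝ → ℝ}
    (h : ∀ a ∈ T, f a ≤ g a) : (T.map f).sum ≤ (T.map g).sum := by
  induction T using Multiset.induction_on with
  | empty => simp
  | cons a T ih =>
    simp only [Multiset.map_cons, Multiset.sum_cons]
    exact add_le_add (h a (Multiset.mem_cons_self a T))
      (ih fun b hb => h b (Multiset.mem_cons_of_mem hb))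

lemma multiset_sum_le_sum' {T : Multiset ℂ} {f g : ℂ → ℝ}
    (h : ∀ a ∈ T, f a ≤ g a) : (T.map f).sum ≤ (T.map g).sum := by
  induction T using Multiset.induction_on with
  | empty => simp
  | cons a T ih =>
    simp only [Multiset.map_cons, Multiset.sum_cons]
    exact add_le_add (h a (Multiset.mem_cons_self a T))
      (ih fun b hb => h b (Multiset.mem_cons_of_mem hb))

/-- log derivative identity -/
lemma logderiv_prod (z : ℂ) (T : Multiset ℂ) (hT : ∀ a ∈ T, z ≠ a) :
    eval z (derivative (T.map fun a => X - C a).prod) =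
      eval z ((T.map fun a => X - C a).prod) * (T.map fun a => (z - a)⁻¹).sum := by
  induction T using Multiset.induction_on with
  | empty => simp
  | cons a T ih =>
    have ha : z - a ≠ 0 := sub_ne_zero.mpr (hT a (Multiset.mem_cons_self a T))
    have ih' := ih (fun b hb => hT b (Multiset.mem_cons_of_mem hb))
    simp only [Multiset.map_cons, Multiset.prod_cons, Multiset.sum_cons,
      derivative_mul, derivative_X_sub_C, one_mul, eval_add, eval_mul, eval_sub,
      eval_X, eval_C, ih']
    field_simp

/-- Lemma A -/
lemma reA {z a : ℂ} (hz : ‖z‖ = 1) (ha1 : ‖a‖ ≤ 1) (hne : z ≠ a) :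
    (1 + ‖a‖)⁻¹ ≤ (z * (z - a)⁻¹).re := by
  have hw : z - a ≠ 0 := sub_ne_zero.mpr hne
  have hnorm : Complex.normSq (z - a) > 0 := Complex.normSq_pos.mpr hw
  rw [mul_comm, ← div_eq_inv_mul, Complex.div_re]
  set r := ‖a‖ with hr
  have hr0 : 0 ≤ r := norm_nonneg a
  have hz2 : z.re ^ 2 + z.im ^ 2 = 1 := by
    have := Complex.sq_norm z
    rw [hz] at this
    simp [Complex.normSq_apply] at this
    nlinarith [this]
  have ha2 : a.re ^ 2 + a.im ^ 2 = r ^ 2 := by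
    have := Complex.sq_norm a
    simp [Complex.normSq_apply] at this
    nlinarith [this]
  have ht : (z.re * a.re + z.im * a.im) ^ 2 ≤ r ^ 2 := by
    nlinarith [sq_nonneg (z.re * a.im - z.im * a.re)]
  set t := z.re * a.re + z.im * a.im with htdef
  have htle : -r ≤ t ∧ t ≤ r := abs_le.mp (by
    rw [← Real.sqrt_sq hr0]
    rw [abs_le]
    constructor
    · nlinarith [Real.sq_sqrt (sq_nonneg r), Real.sqrt_nonneg (r^2), ht]
    · nlinarith [Real.sq_sqrt (sq_nonneg r), Real.sqrt_nonneg (r^2), ht])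
  have hnsq : Complex.normSq (z - a) = 1 - 2 * t + r ^ 2 := by
    simp [Complex.normSq_apply, Complex.sub_re, Complex.sub_im]
    nlinarith [hz2, ha2]
  have hnum : z.re * (z - a).re + z.im * (z - a).im = 1 - t := by
    simp [Complex.sub_re, Complex.sub_im]
    nlinarith [hz2]
  rw [← add_div, hnum, hnsq]
  rw [hnsq] at hnorm
  rw [inv_eq_one_div, div_le_div_iff₀ (by positivity) hnorm]
  nlinarith [htle.1, htle.2, hnorm]


lemma stepB {k a K P : ℝ} (hk0 : 0 < k) (hk1 : k ≤ 1) (ha0 : 0 ≤ a) (hak : a ≤ k)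
    (hP0 : 0 ≤ P) (hPK : P ≤ K) (hK : 0 < K) :
    1/(1+k) + (k/(1+k)) * ((k*K - a*P)/(k*K + a*P)) ≤
      (1+a)⁻¹ + (k/(1+k)) * ((K-P)/(K+P)) := by
  have h1 : (0:ℝ) < 1 + k := by linarith
  have h2 : (0:ℝ) < 1 + a := by linarith
  have h3 : (0:ℝ) < k*K + a*P := by positivity
  have h4 : (0:ℝ) < K + P := by linarith
  have inner : (k*K - a*P)/(k*K + a*P) - (K-P)/(K+P) ≤ (k-a)/(k+a) := by
    rw [div_sub_div _ _ (ne_of_gt h3) (ne_of_gt h4), div_le_div_iff₀ (by positivity) (by positivity)]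
    nlinarith [mul_nonneg (mul_nonneg (sub_nonneg.mpr hak) (sub_nonneg.mpr hPK))
      (sub_nonneg.mpr (mul_le_mul hak hPK hP0 hk0.le))]
  have key : 1/(1+k) + (k/(1+k))*((k-a)/(k+a)) ≤ (1+a)⁻¹ := by
    rw [inv_eq_one_div, div_mul_div_comm,
      div_add_div _ _ (ne_of_gt h1) (by positivity), div_le_div_iff₀ (by positivity) h2]
    nlinarith [mul_nonneg (mul_nonneg ha0 (sub_nonneg.mpr hk1)) (sub_nonneg.mpr hak)]
  have hmul : (k/(1+k)) * ((k*K - a*P)/(k*K + a*P) - (K-P)/(K+P)) ≤ (k/(1+k)) * ((k-a)/(k+a)) := by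
    apply mul_le_mul_of_nonneg_left inner (by positivity)
  nlinarith [hmul, key]

lemma sumB (k : ℝ) (hk0 : 0 < k) (hk1 : k ≤ 1) (T : Multiset ℝ)
    (h : ∀ r ∈ T, 0 ≤ r ∧ r ≤ k) :
    0 ≤ T.prod ∧ T.prod ≤ k ^ (Multiset.card T) ∧
    ((Multiset.card T : ℝ)/(1+k)
        + (k/(1+k)) * ((k ^ (Multiset.card T) - T.prod)/(k ^ (Multiset.card T) + T.prod))
      ≤ (T.map fun r => (1+r)⁻¹).sum) := by
  induction T using Multiset.induction_on with
  | empty => simp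
  | cons a T ih =>
    obtain ⟨ha0, hak⟩ := h a (Multiset.mem_cons_self a T)
    obtain ⟨hP0, hPK, hsum⟩ := ih (fun b hb => h b (Multiset.mem_cons_of_mem hb))
    have hK : (0:ℝ) < k ^ (Multiset.card T) := by positivity
    refine ⟨by simpa [Multiset.prod_cons] using mul_nonneg ha0 hP0, ?_, ?_⟩
    · simp only [Multiset.prod_cons, Multiset.card_cons, pow_succ, pow_succ']
      calc a * T.prod ≤ k * T.prod := by nlinarith
        _ ≤ k * k ^ (Multiset.card T) := by nlinarith
        _ = k ^ (Multiset.card T) * k := by ring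
      -- adjust form
    · simp only [Multiset.prod_cons, Multiset.card_cons, Multiset.map_cons, Multiset.sum_cons,
        pow_succ']
      push_cast
      have := stepB hk0 hk1 ha0 hak hP0 hPK hK
      have h2 : ((Multiset.card T : ℝ) + 1)/(1+k) = 1/(1+k) + (Multiset.card T : ℝ)/(1+k) := by
        ring
      rw [h2]
      calc 1/(1+k) + (Multiset.card T : ℝ)/(1+k)
            + k/(1+k) * ((k * k ^ (Multiset.card T) - a * T.prod)/(k * k ^ (Multiset.card T) + a * T.prod))
          ≤ (1+a)⁻¹ + (k/(1+k)) * ((k ^ (Multiset.card T) - T.prod)/(k ^ (Multiset.card T) + T.prod))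
            + (Multiset.card T : ℝ)/(1+k) := by linarith [this]
        _ ≤ (1+a)⁻¹ + (T.map fun r => (1+r)⁻¹).sum := by linarith [hsum]


lemma abs_multiset_prod (T : Multiset ℂ) :
    ‖T.prod‖ = (T.map (‖·‖)).prod := by
  induction T using Multiset.induction_on with
  | empty => simp
  | cons a T ih => simp [ih]

theorem turan_polynomial_sfold_zeros_coeff
    (k : ℝ) (hk0 : 0 < k) (hk1 : k ≤ 1)
    (n s : ℕ) (hsn : s ≤ n)
    (p : Polynomial ℂ) (hp0 : p ≠ 0) (hdeg : p.natDegree = n)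
    (hzeros : ∀ z : ℂ, p.IsRoot z → ‖z‖ ≤ k)
    (hs : X ^ s ∣ p)
    (z : ℂ) (hz : ‖z‖ = 1) :
    ‖(Polynomial.derivative p).eval z‖ ≥
      ((n : ℝ) / (k + 1)) * (1 + (s : ℝ) * k / (n : ℝ)
        + (k / (n : ℝ)) *
          ((k ^ (n - s) * ‖p.coeff n‖ - ‖p.coeff s‖) /
            (k ^ (n - s) * ‖p.coeff n‖ + ‖p.coeff s‖)))
        * ‖p.eval z‖ := by
  rcases Nat.eq_zero_or_pos n with hn0 | hn
  · subst hn0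
    simp only [CharP.cast_eq_zero, zero_div, zero_mul, ge_iff_le]
    exact norm_nonneg _
  have hnR : (0:ℝ) < n := by exact_mod_cast hn
  set c := p.leadingCoeff with hcdef
  have hc : c ≠ 0 := leadingCoeff_ne_zero.mpr hp0
  have hcabs : 0 < ‖c‖ := norm_pos_iff.mpr hc
  have hcoeffn : p.coeff n = c := by rw [← hdeg]; rfl
  have hsplits : Splits p := IsAlgClosed.splits p
  have hfact : p = C c * (p.roots.map fun a => X - C a).prod :=
    hsplits.eq_prod_roots
  have hcard : Multiset.card p.roots = n := by
    rw [← hdeg]; exact (splits_iff_card_roots.mp hsplits)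
  have hs' : s ≤ p.roots.count 0 := by
    rw [count_roots, Polynomial.le_rootMultiplicity_iff hp0]
    simpa using hs
  have hrep : Multiset.replicate s (0:ℂ) ≤ p.roots := by
    rw [Multiset.le_iff_count]
    intro b
    rw [Multiset.count_replicate]
    split_ifs with hb
    · subst hb; exact hs'
    · exact Nat.zero_le _
  set Q := p.roots - Multiset.replicate s 0 with hQdef
  have hQ : Q + Multiset.replicate s 0 = p.roots := tsub_add_cancel_of_le hrep
  have hcardQ : Multiset.card Q = n - s := by
    rw [hQdef, Multiset.card_sub hrep, hcard, Multiset.card_replicate]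
  have hroots : ∀ a ∈ p.roots, ‖a‖ ≤ k := fun a ha =>
    hzeros a (isRoot_of_mem_roots ha)
  have hQroots : ∀ a ∈ Q, ‖a‖ ≤ k := fun a ha =>
    hroots a (by rw [← hQ]; exact Multiset.mem_add.mpr (Or.inl ha))
  set qQ := (Q.map fun a => X - C a).prod with hqQ
  -- factorization exposing X^s
  have hfact2 : p = C c * (X ^ s * qQ) := by
    conv_lhs => rw [hfact]
    congr 1
    rw [← hQ, Multiset.map_add, Multiset.prod_add]
    rw [Multiset.map_replicate, Multiset.prod_replicate]
    simp [mul_comm]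
    rfl
  -- coefficient s
  set P : ℝ := (Q.map (‖·‖)).prod with hPdef
  have habs_cs : ‖p.coeff s‖ = ‖c‖ * P := by
    have hcs : p.coeff s = c * qQ.coeff 0 := by
      rw [hfact2, coeff_C_mul]
      congr 1
      have := Polynomial.coeff_mul_X_pow qQ s 0
      simpa [mul_comm] using this
    have hq0 : qQ.coeff 0 = (Q.map fun a => (0:ℂ) - a).prod := by
      rw [coeff_zero_eq_eval_zero, hqQ, eval_multiset_prod, Multiset.map_map]
      simp [Function.comp]
    rw [hcs, norm_mul, hq0, abs_multiset_prod, Multiset.map_map, hPdef]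
    congr 1
    refine congrArg Multiset.prod (Multiset.map_congr rfl fun a _ => ?_)
    simp
  -- abbreviations
  set A : ℝ := k ^ (n - s) with hAdef
  have hA : 0 < A := by positivity
  -- product facts from sumB
  have hmem : ∀ r ∈ Q.map (‖·‖), 0 ≤ r ∧ r ≤ k := by
    intro r hr
    obtain ⟨a, ha, rfl⟩ := Multiset.mem_map.mp hr
    exact ⟨norm_nonneg _, hQroots a ha⟩
  have hcardT : Multiset.card (Q.map (‖·‖)) = n - s := by
    rw [Multiset.card_map, hcardQ]
  obtain ⟨hP0, hPA, hsumQ⟩ := sumB k hk0 hk1 (Q.map (‖·‖)) hmem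
  rw [hcardT] at hPA hsumQ
  rw [Multiset.map_map] at hsumQ
  simp only [Function.comp] at hsumQ
  -- coefficient ratio equals (A - P)/(A + P)
  have hratio : (A * ‖p.coeff n‖ - ‖p.coeff s‖) /
      (A * ‖p.coeff n‖ + ‖p.coeff s‖) = (A - P)/(A + P) := by
    rw [hcoeffn, habs_cs]
    rw [show A * ‖c‖ - ‖c‖ * P = ‖c‖ * (A - P) by ring,
        show A * ‖c‖ + ‖c‖ * P = ‖c‖ * (A + P) by ring]
    exact mul_div_mul_left _ _ (ne_of_gt hcabs)
  rw [hratio]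
  -- case p(z) = 0
  rcases eq_or_ne (Polynomial.eval z p) 0 with hpz | hpz
  · rw [hpz, norm_zero, mul_zero]
    exact norm_nonneg _
  have hzr : ∀ a ∈ p.roots, z ≠ a := by
    intro a ha heq
    exact hpz (heq ▸ (isRoot_of_mem_roots ha))
  -- derivative identity
  set S : ℂ := (p.roots.map fun a => (z - a)⁻¹).sum with hSdef
  have hder : Polynomial.eval z (derivative p) = Polynomial.eval z p * S := by
    conv_lhs => rw [hfact]
    simp only [derivative_mul, derivative_C, zero_mul, zero_add, eval_mul, eval_C]
    rw [logderiv_prod z p.roots hzr]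
    conv_rhs => rw [hfact]
    simp only [eval_mul, eval_C]
    ring
  -- real part bound
  have hzS : (z * S).re = (p.roots.map fun a => (z * (z - a)⁻¹).re).sum := by
    rw [hSdef, ← Multiset.sum_map_mul_left, multiset_re_sum, Multiset.map_map]
    rfl
  have hre1 : (p.roots.map fun a => (1 + ‖a‖)⁻¹).sum ≤ (z * S).re := by
    rw [hzS]
    apply multiset_sum_le_sum'
    intro a ha
    exact reA hz (le_trans (hroots a ha) hk1) (hzr a ha)
  have hsplit : (p.roots.map fun a => (1 + ‖a‖)⁻¹).sum =
      (s : ℝ) + (Q.map fun a => (1 + ‖a‖)⁻¹).sum := by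
    rw [← hQ, Multiset.map_add, Multiset.sum_add, Multiset.map_replicate]
    simp [add_comm]
  -- lower bound on (z*S).re
  have hlow : (s : ℝ) + ((n:ℝ) - s)/(1+k) + (k/(1+k)) * ((A - P)/(A + P)) ≤ (z * S).re := by
    have hcast : ((n - s : ℕ) : ℝ) = (n : ℝ) - s := by
      rw [Nat.cast_sub hsn]
    rw [hcast] at hsumQ
    calc (s : ℝ) + ((n:ℝ) - s)/(1+k) + (k/(1+k)) * ((A - P)/(A + P))
        ≤ (s : ℝ) + (Q.map fun a => (1 + ‖a‖)⁻¹).sum := by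
          have := hsumQ
          simp only [hAdef, hPdef]
          linarith [this]
      _ = (p.roots.map fun a => (1 + ‖a‖)⁻¹).sum := hsplit.symm
      _ ≤ (z * S).re := hre1
  -- assemble
  have habs_der : ‖Polynomial.eval z (derivative p)‖ =
      ‖Polynomial.eval z p‖ * ‖S‖ := by
    rw [hder, norm_mul]
  have hSre : (z * S).re ≤ ‖S‖ := by
    calc (z * S).re ≤ ‖z * S‖ := Complex.re_le_norm _
      _ = ‖z‖ * ‖S‖ := norm_mul _ _
      _ = ‖S‖ := by rw [hz, one_mul]
  have hM : ((n : ℝ) / (k + 1)) * (1 + (s : ℝ) * k / (n : ℝ)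
      + (k / (n : ℝ)) * ((A - P)/(A + P)))
      = (s : ℝ) + ((n:ℝ) - s)/(1+k) + (k/(1+k)) * ((A - P)/(A + P)) := by
    have hk1' : (k + 1) ≠ 0 := by positivity
    field_simp
    ring
  rw [hM, ge_iff_le, habs_der]
  have habsp : 0 ≤ ‖Polynomial.eval z p‖ := norm_nonneg _
  calc ((s : ℝ) + ((n:ℝ) - s)/(1+k) + (k/(1+k)) * ((A - P)/(A + P)))
        * ‖Polynomial.eval z p‖
      ≤ (z * S).re * ‖Polynomial.eval z p‖ := by
        apply mul_le_mul_of_nonneg_right hlow habsp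
    _ ≤ ‖S‖ * ‖Polynomial.eval z p‖ := by
        apply mul_le_mul_of_nonneg_right hSre habsp
    _ = ‖Polynomial.eval z p‖ * ‖S‖ := mul_comm _ _
end

section
/- Let n ∈ ℕ with n ≥ 1 and let x_1,…,x_n be real numbers with 0 ≤ x_j ≤ 1 for all j. Then ∑_{j=1}^n (1 − x_j)/(1 + x_j) ≥ (1 − ∏_{j=1}^n x_j)/(1 + ∏_{j=1}^n x_j). -/
lemma key_lemma (a b : ℝ) (ha0 : 0 ≤ a) (ha1 : a ≤ 1) (hb0 : 0 ≤ b) (hb1 : b ≤ 1) :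
    (1 - a * b) / (1 + a * b) ≤ (1 - a) / (1 + a) + (1 - b) / (1 + b) := by
  have h1 : (0:ℝ) < 1 + a := by linarith
  have h2 : (0:ℝ) < 1 + b := by linarith
  have h3 : (0:ℝ) < 1 + a * b := by positivity
  rw [div_add_div _ _ (ne_of_gt h1) (ne_of_gt h2), div_le_div_iff₀ h3 (by positivity)]
  have hab : a * b ≤ 1 := mul_le_one₀ ha1 hb0 hb1
  nlinarith [mul_nonneg (mul_nonneg (sub_nonneg.2 hab) (sub_nonneg.2 ha1)) (sub_nonneg.2 hb1)]

lemma aux (n : ℕ) (x : Fin n → ℝ)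
    (hx0 : ∀ j, 0 ≤ x j) (hx1 : ∀ j, x j ≤ 1) :
    (1 - ∏ j, x j) / (1 + ∏ j, x j) ≤ ∑ j, (1 - x j) / (1 + x j) := by
  induction n with
  | zero => simp
  | succ n ih =>
    rw [Fin.sum_univ_succ, Fin.prod_univ_succ]
    have hp0 : 0 ≤ ∏ j : Fin n, x j.succ := Finset.prod_nonneg (fun j _ => hx0 _)
    have hp1 : ∏ j : Fin n, x j.succ ≤ 1 :=
      Finset.prod_le_one (fun j _ => hx0 _) (fun j _ => hx1 _)
    calc (1 - x 0 * ∏ j : Fin n, x j.succ) / (1 + x 0 * ∏ j : Fin n, x j.succ)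
        ≤ (1 - x 0) / (1 + x 0) + (1 - ∏ j : Fin n, x j.succ) / (1 + ∏ j : Fin n, x j.succ) :=
          key_lemma _ _ (hx0 0) (hx1 0) hp0 hp1
      _ ≤ (1 - x 0) / (1 + x 0) + ∑ j : Fin n, (1 - x j.succ) / (1 + x j.succ) := by
          gcongr; exact ih _ (fun j => hx0 _) (fun j => hx1 _)

theorem sum_div_ge_prod_div (n : ℕ) (hn : 1 ≤ n) (x : Fin n → ℝ)
    (hx0 : ∀ j, 0 ≤ x j) (hx1 : ∀ j, x j ≤ 1) :
    ∑ j, (1 - x j) / (1 + x j) ≥ (1 - ∏ j, x j) / (1 + ∏ j, x j) := by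
  exact aux n x hx0 hx1
end

section
/- Let n ∈ ℕ, let a_1,…,a_n ∈ ℂ with |a_j| > 1 for all j, let w(z) = ∏_{j=1}^n (z − a_j) and let B be the associated Blaschke product. Let p be a complex polynomial of degree exactly n all of whose zeros lie in the closed unit disk {z : |z| ≤ 1}, set r(z) = p(z)/w(z), and let m′ = min_{|z| = 1} |r(z)|. Then for every z ∈ ℂ with |z| = 1, |r′(z)| ≥ (1/2) · |B′(z)| · ( |r(z)| + m′ ). -/
open Complex Polynomial Finset

noncomputable def Complex.abs : AbsoluteValue ℂ ℝ := IsAbsoluteValue.toAbsoluteValue (norm : ℂ → ℝ)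

theorem Complex.normSq_eq_abs (z : ℂ) : normSq z = Complex.abs z ^ 2 := Complex.normSq_eq_norm_sq z

theorem Complex.sq_abs (z : ℂ) : Complex.abs z ^ 2 = normSq z := (Complex.normSq_eq_norm_sq z).symm

@[simp]
theorem Complex.abs_conj (z : ℂ) : Complex.abs ((starRingEnd ℂ) z) = Complex.abs z := Complex.norm_conj z

@[simp]
theorem Complex.abs_ofReal (r : ℝ) : Complex.abs (r : ℂ) = |r| :=
  (Complex.norm_real r).trans (Real.norm_eq_abs r)

theorem Complex.re_le_abs (z : ℂ) : z.re ≤ Complex.abs z := Complex.re_le_norm z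

@[simp]
theorem Complex.norm_eq_abs (z : ℂ) : ‖z‖ = Complex.abs z := rfl

namespace TuranAux


lemma exists_factorization (n : ℕ) (q : ℂ[X]) (hq : q ≠ 0) (hdeg : q.natDegree = n) :
    ∃ (c : ℂ) (b : Fin n → ℂ), c ≠ 0 ∧ c = q.leadingCoeff ∧ (∀ k, q.IsRoot (b k)) ∧
      ∀ ζ : ℂ, q.eval ζ = c * ∏ k, (ζ - b k) := by
  have hsplit : q.roots.card = q.natDegree :=
    (Polynomial.splits_iff_card_roots.mp (IsAlgClosed.splits q))
  have hlen : q.roots.toList.length = n := by rw [Multiset.length_toList, hsplit, hdeg]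
  refine ⟨q.leadingCoeff, fun i => q.roots.toList.get (Fin.cast hlen.symm i),
    leadingCoeff_ne_zero.mpr hq, rfl, ?_, ?_⟩
  · intro k
    have hmem : q.roots.toList.get (Fin.cast hlen.symm k) ∈ q.roots.toList :=
      List.mem_iff_get.mpr ⟨_, rfl⟩
    rw [Multiset.mem_toList] at hmem
    exact isRoot_of_mem_roots hmem
  · intro ζ
    conv_lhs => rw [← Polynomial.C_leadingCoeff_mul_prod_multiset_X_sub_C hsplit]
    rw [eval_mul, eval_C, eval_multiset_prod, Multiset.map_map]
    congr 1
    have h1 : (Multiset.map (eval ζ ∘ fun a => X - C a) q.roots).prod =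
        (q.roots.toList.map (fun a => ζ - a)).prod := by
      conv_lhs => rw [← Multiset.coe_toList q.roots]
      rw [Multiset.map_coe, Multiset.prod_coe]
      congr 1
      apply List.map_congr_left
      intro x _
      simp
    rw [h1]
    have h2 : q.roots.toList.map (fun a => ζ - a) =
        List.ofFn (fun i : Fin q.roots.toList.length => (ζ - q.roots.toList.get i)) := by
      apply List.ext_getElem <;> simp
    rw [h2, List.prod_ofFn]
    exact (Fin.prod_congr' _ hlen.symm).symm



lemma re_div_eq (z b : ℂ) (hz : Complex.abs z = 1) :
    (z / (z - b)).re = (1 - (z * (starRingEnd ℂ) b).re) / normSq (z - b) := by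
  by_cases hzb : z - b = 0
  · have hb : b = z := (sub_eq_zero.mp hzb).symm
    subst hb
    simp
  · have hcne : (starRingEnd ℂ) (z - b) ≠ 0 := fun h => hzb (by simpa using congrArg (starRingEnd ℂ) h)
    have h1 : z / (z - b) = (z * (starRingEnd ℂ) (z - b)) / ((normSq (z - b) : ℝ) : ℂ) := by
      rw [← mul_conj (z - b)]
      rw [mul_div_mul_right _ _ hcne]
    have h2 : z * (starRingEnd ℂ) (z - b) = 1 - z * (starRingEnd ℂ) b := by
      rw [map_sub, mul_sub, mul_conj]
      norm_num [normSq_eq_abs, hz]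
    rw [h1, h2, div_ofReal_re]
    simp

lemma normSq_sub_eq (z b : ℂ) (hz : Complex.abs z = 1) :
    normSq (z - b) = 1 + normSq b - 2 * (z * (starRingEnd ℂ) b).re := by
  rw [normSq_sub]
  have : normSq z = 1 := by rw [normSq_eq_abs, hz]; norm_num
  rw [this]

lemma root_term (z b : ℂ) (hz : Complex.abs z = 1) (hb : Complex.abs b ≤ 1)
    (hne : z - b ≠ 0) : (1:ℝ)/2 ≤ (z / (z - b)).re := by
  rw [re_div_eq z b hz]
  have h1 : 0 < normSq (z - b) := normSq_pos.mpr hne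
  have h2 : normSq (z - b) = 1 + normSq b - 2 * (z * (starRingEnd ℂ) b).re :=
    normSq_sub_eq z b hz
  have h3 : normSq b ≤ 1 := by
    rw [← sq_abs]; nlinarith [Complex.abs.nonneg b]
  rw [le_div_iff₀ h1]
  nlinarith

lemma pole_term (z a : ℂ) (hz : Complex.abs z = 1) (hne : z - a ≠ 0) :
    (1:ℝ)/2 - (z / (z - a)).re = (normSq a - 1) / (2 * normSq (z - a)) := by
  rw [re_div_eq z a hz]
  have h1 : 0 < normSq (z - a) := normSq_pos.mpr hne
  have h2 : normSq (z - a) = 1 + normSq a - 2 * (z * (starRingEnd ℂ) a).re :=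
    normSq_sub_eq z a hz
  have h4 : (z * (starRingEnd ℂ) a).re = z.re*a.re + z.im*a.im := by
    simp [mul_re, conj_re, conj_im]
  field_simp
  nlinarith


lemma core (n : ℕ) (a : Fin n → ℂ) (ha : ∀ j, 1 < Complex.abs (a j))
    (c : ℂ) (hc : c ≠ 0) (b : Fin n → ℂ) (hb : ∀ k, Complex.abs (b k) ≤ 1)
    (z : ℂ) (hz : Complex.abs z = 1) :
    (∑ j, (normSq (a j) - 1) / normSq (z - a j)) / 2 *
        Complex.abs ((c * ∏ k, (z - b k)) / ∏ j, (z - a j))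
      ≤ Complex.abs (deriv (fun ζ => (c * ∏ k, (ζ - b k)) / ∏ j, (ζ - a j)) z) := by
  have hza : ∀ j, z - a j ≠ 0 := by
    intro j h
    rw [sub_eq_zero] at h
    rw [h] at hz
    exact absurd hz (by have := ha j; linarith)
  by_cases hzb : ∀ k, z - b k ≠ 0
  · set F : ℂ → ℂ := fun ζ => c * ∏ k, (ζ - b k) with hF
    set G : ℂ → ℂ := fun ζ => ∏ j, (ζ - a j) with hG
    have hFz : F z ≠ 0 := mul_ne_zero hc (Finset.prod_ne_zero_iff.mpr fun k _ => hzb k)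
    have hGz : G z ≠ 0 := Finset.prod_ne_zero_iff.mpr fun j _ => hza j
    have hdiffb : ∀ k : Fin n, DifferentiableAt ℂ (fun ζ : ℂ => ζ - b k) z :=
      fun k => (differentiable_id.sub_const _).differentiableAt
    have hdiffa : ∀ j : Fin n, DifferentiableAt ℂ (fun ζ : ℂ => ζ - a j) z :=
      fun j => (differentiable_id.sub_const _).differentiableAt
    have hFd : DifferentiableAt ℂ F z :=
      (DifferentiableAt.fun_finsetProd fun k _ => hdiffb k).const_mul c
    have hGd : DifferentiableAt ℂ G z :=
      DifferentiableAt.fun_finsetProd fun j _ => hdiffa j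
    have hlogF : logDeriv F z = ∑ k, (z - b k)⁻¹ := by
      have h1 : logDeriv F z = logDeriv (fun ζ => ∏ k, (ζ - b k)) z :=
        logDeriv_const_mul z c hc
      rw [h1]
      have h2 : (fun ζ : ℂ => ∏ k, (ζ - b k)) = (∏ k ∈ Finset.univ, (fun ζ : ℂ => ζ - b k) ·) := rfl
      rw [h2, logDeriv_prod (fun k _ => hzb k) (fun k _ => hdiffb k)]
      refine Finset.sum_congr rfl fun k _ => ?_
      rw [logDeriv_apply]
      simp [one_div]
    have hlogG : logDeriv G z = ∑ j, (z - a j)⁻¹ := by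
      have h2 : (fun ζ : ℂ => ∏ j, (ζ - a j)) = (∏ j ∈ Finset.univ, (fun ζ : ℂ => ζ - a j) ·) := rfl
      rw [hG, h2, logDeriv_prod (fun j _ => hza j) (fun j _ => hdiffa j)]
      refine Finset.sum_congr rfl fun j _ => ?_
      rw [logDeriv_apply]
      simp [one_div]
    have hlog : logDeriv (fun ζ => F ζ / G ζ) z = ∑ k, (z - b k)⁻¹ - ∑ j, (z - a j)⁻¹ := by
      rw [logDeriv_div z hFz hGz hFd hGd, hlogF, hlogG]
    have hre : (∑ j, (normSq (a j) - 1) / normSq (z - a j)) / 2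
        ≤ (z * logDeriv (fun ζ => F ζ / G ζ) z).re := by
      rw [hlog, mul_sub, Finset.mul_sum, Finset.mul_sum]
      have hzre : ∀ x : ℂ, z * x⁻¹ = z / x := fun x => (div_eq_mul_inv z x).symm
      simp only [hzre, sub_re, re_sum]
      have h1 : (n : ℝ) * (1/2) ≤ ∑ k : Fin n, (z / (z - b k)).re := by
        calc (n : ℝ) * (1/2) = ∑ _k : Fin n, (1:ℝ)/2 := by
              simp [Finset.sum_const]
          _ ≤ _ := Finset.sum_le_sum fun k _ => root_term z (b k) hz (hb k) (hzb k)
      have h2 : (∑ j, (normSq (a j) - 1) / normSq (z - a j)) / 2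
          = (n : ℝ) * (1/2) - ∑ j : Fin n, (z / (z - a j)).re := by
        rw [Finset.sum_div, eq_sub_iff_add_eq]
        calc (∑ j, (normSq (a j) - 1) / normSq (z - a j) / 2) + ∑ j : Fin n, (z / (z - a j)).re
            = ∑ j : Fin n, ((normSq (a j) - 1) / normSq (z - a j) / 2 + (z / (z - a j)).re) := by
              rw [Finset.sum_add_distrib]
          _ = ∑ _j : Fin n, (1:ℝ)/2 := by
              refine Finset.sum_congr rfl fun j _ => ?_
              have := pole_term z (a j) hz (hza j)
              have h3 : (normSq (a j) - 1) / normSq (z - a j) / 2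
                  = (normSq (a j) - 1) / (2 * normSq (z - a j)) := by
                rw [div_div]; ring_nf
              rw [h3]; linarith
          _ = (n : ℝ) * (1/2) := by simp [Finset.sum_const]
      rw [h2]
      linarith
    have hderiv : deriv (fun ζ => F ζ / G ζ) z
        = logDeriv (fun ζ => F ζ / G ζ) z * (F z / G z) := by
      rw [logDeriv_apply]
      field_simp
    calc (∑ j, (normSq (a j) - 1) / normSq (z - a j)) / 2 * Complex.abs (F z / G z)
        ≤ (z * logDeriv (fun ζ => F ζ / G ζ) z).re * Complex.abs (F z / G z) := by
          apply mul_le_mul_of_nonneg_right hre (Complex.abs.nonneg _)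
      _ ≤ Complex.abs (z * logDeriv (fun ζ => F ζ / G ζ) z) * Complex.abs (F z / G z) := by
          apply mul_le_mul_of_nonneg_right (Complex.re_le_abs _) (Complex.abs.nonneg _)
      _ = Complex.abs (logDeriv (fun ζ => F ζ / G ζ) z) * Complex.abs (F z / G z) := by
          rw [map_mul, hz, one_mul]
      _ = Complex.abs (deriv (fun ζ => F ζ / G ζ) z) := by
          rw [hderiv, map_mul]
  · push_neg at hzb
    obtain ⟨k, hk⟩ := hzb
    have h0 : (c * ∏ k, (z - b k)) / ∏ j, (z - a j) = 0 := by
      rw [Finset.prod_eq_zero (Finset.mem_univ k) hk]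
      simp
    rw [h0]
    simp only [map_zero, mul_zero]
    exact Complex.abs.nonneg _



lemma one_sub_conj (a z : ℂ) (hz : Complex.abs z = 1) :
    1 - (starRingEnd ℂ) a * z = z * (starRingEnd ℂ) (z - a) := by
  have h1 : z * (starRingEnd ℂ) z = ((normSq z : ℝ) : ℂ) := mul_conj z
  have h2 : normSq z = 1 := by rw [normSq_eq_abs, hz]; norm_num
  rw [map_sub, mul_sub, h1, h2]
  push_cast
  ring

lemma factor_abs (a z : ℂ) (hz : Complex.abs z = 1) (hne : z - a ≠ 0) :
    Complex.abs ((1 - (starRingEnd ℂ) a * z) / (z - a)) = 1 := by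
  rw [one_sub_conj a z hz, map_div₀, map_mul, hz, one_mul, abs_conj,
    div_self (Complex.abs.ne_zero hne)]

lemma factor_logDeriv (a z : ℂ) (hz : Complex.abs z = 1) (hne : z - a ≠ 0) :
    z * logDeriv (fun ζ => (1 - (starRingEnd ℂ) a * ζ) / (ζ - a)) z
      = ((normSq a - 1 : ℝ) : ℂ) / ((normSq (z - a) : ℝ) : ℂ) := by
  have hzne : z ≠ 0 := by
    intro h; rw [h] at hz; simp at hz
  have hnum : 1 - (starRingEnd ℂ) a * z ≠ 0 := by
    rw [one_sub_conj a z hz]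
    exact mul_ne_zero hzne (fun h => hne (by simpa using congrArg (starRingEnd ℂ) h))
  have hd1 : HasDerivAt (fun ζ : ℂ => 1 - (starRingEnd ℂ) a * ζ) (-(starRingEnd ℂ) a) z := by
    simpa using ((hasDerivAt_id z).const_mul ((starRingEnd ℂ) a)).const_sub 1
  have hd2 : HasDerivAt (fun ζ : ℂ => ζ - a) 1 z := (hasDerivAt_id z).sub_const a
  have hlog : logDeriv (fun ζ => (1 - (starRingEnd ℂ) a * ζ) / (ζ - a)) z
      = (-(starRingEnd ℂ) a) / (1 - (starRingEnd ℂ) a * z) - 1 / (z - a) := by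
    rw [logDeriv_div z hnum hne hd1.differentiableAt hd2.differentiableAt,
      logDeriv_apply, logDeriv_apply, hd1.deriv, hd2.deriv]
  rw [hlog]
  have hcz : z * (starRingEnd ℂ) z = 1 := by
    rw [mul_conj]
    norm_cast
    rw [normSq_eq_abs, hz]; norm_num
  have hca : (starRingEnd ℂ) a * a = ((normSq a : ℝ) : ℂ) := by
    rw [mul_comm, mul_conj]
  have hcza : (z - a) * (starRingEnd ℂ) (z - a) = ((normSq (z - a) : ℝ) : ℂ) := mul_conj _
  have hcne : (starRingEnd ℂ) (z - a) ≠ 0 :=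
    fun h => hne (by simpa using congrArg (starRingEnd ℂ) h)
  rw [one_sub_conj a z hz]
  have e1 : z * (-(starRingEnd ℂ) a / (z * (starRingEnd ℂ) (z - a)) - 1 / (z - a))
      = -(starRingEnd ℂ) a / (starRingEnd ℂ) (z - a) - z / (z - a) := by
    rw [mul_sub, mul_one_div, ← mul_div_assoc, mul_div_mul_left _ _ hzne]
  rw [e1, div_sub_div _ _ hcne hne, mul_comm ((starRingEnd ℂ) (z - a)) (z - a), hcza]
  push_cast
  congr 1
  rw [map_sub]
  linear_combination hca - hcz


lemma B_abs_one (n : ℕ) (a : Fin n → ℂ) (ha : ∀ j, 1 < Complex.abs (a j)) (z : ℂ)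
    (hz : Complex.abs z = 1) (hza : ∀ j, z - a j ≠ 0) :
    Complex.abs (∏ j, (1 - (starRingEnd ℂ) (a j) * z) / (z - a j)) = 1 := by
  rw [map_prod]
  rw [Finset.prod_eq_one fun j _ => factor_abs (a j) z hz (hza j)]

lemma B_deriv_abs (n : ℕ) (a : Fin n → ℂ) (ha : ∀ j, 1 < Complex.abs (a j)) (z : ℂ)
    (hz : Complex.abs z = 1) (hza : ∀ j, z - a j ≠ 0) :
    Complex.abs (deriv (fun ζ => ∏ j, (1 - (starRingEnd ℂ) (a j) * ζ) / (ζ - a j)) z)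
      = ∑ j, (normSq (a j) - 1) / normSq (z - a j) := by
  set T : ℝ := ∑ j, (normSq (a j) - 1) / normSq (z - a j) with hT
  have hTnn : 0 ≤ T := by
    apply Finset.sum_nonneg
    intro j _
    apply div_nonneg _ (normSq_nonneg _)
    have : 1 < normSq (a j) := by
      rw [← sq_abs]
      nlinarith [ha j]
    linarith
  set f : Fin n → ℂ → ℂ := fun j ζ => (1 - (starRingEnd ℂ) (a j) * ζ) / (ζ - a j) with hf
  have hfz : ∀ j, f j z ≠ 0 := by
    intro j
    have := factor_abs (a j) z hz (hza j)
    intro h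
    rw [hf] at h
    simp only at h
    rw [h] at this
    simp at this
  have hfd : ∀ j : Fin n, DifferentiableAt ℂ (f j) z := by
    intro j
    apply DifferentiableAt.div
    · exact (differentiableAt_const _).sub (differentiableAt_fun_id.const_mul _)
    · exact differentiableAt_fun_id.sub_const _
    · exact hza j
  have hprodeq : (fun ζ : ℂ => ∏ j, (1 - (starRingEnd ℂ) (a j) * ζ) / (ζ - a j))
      = (∏ j ∈ Finset.univ, f j ·) := rfl
  have hBzne : (∏ j, f j z) ≠ 0 := Finset.prod_ne_zero_iff.mpr fun j _ => hfz j
  have hlog : logDeriv (fun ζ : ℂ => ∏ j, (1 - (starRingEnd ℂ) (a j) * ζ) / (ζ - a j)) z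
      = ∑ j, logDeriv (f j) z := by
    rw [hprodeq, logDeriv_prod (fun j _ => hfz j) (fun j _ => hfd j)]
  have hzl : z * logDeriv (fun ζ : ℂ => ∏ j, (1 - (starRingEnd ℂ) (a j) * ζ) / (ζ - a j)) z
      = ((T : ℝ) : ℂ) := by
    rw [hlog, Finset.mul_sum, hT]
    push_cast
    refine Finset.sum_congr rfl fun j _ => ?_
    rw [show z * logDeriv (f j) z
        = z * logDeriv (fun ζ => (1 - (starRingEnd ℂ) (a j) * ζ) / (ζ - a j)) z from rfl,
      factor_logDeriv (a j) z hz (hza j)]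
    push_cast
    ring
  have hderiv : deriv (fun ζ : ℂ => ∏ j, (1 - (starRingEnd ℂ) (a j) * ζ) / (ζ - a j)) z
      = logDeriv (fun ζ : ℂ => ∏ j, (1 - (starRingEnd ℂ) (a j) * ζ) / (ζ - a j)) z
        * ∏ j, f j z := by
    rw [logDeriv_apply, div_mul_cancel₀]
    exact hBzne
  rw [hderiv, map_mul]
  have h1 : Complex.abs (∏ j, f j z) = 1 := B_abs_one n a ha z hz hza
  rw [h1, mul_one]
  have h2 : Complex.abs (logDeriv (fun ζ : ℂ => ∏ j, (1 - (starRingEnd ℂ) (a j) * ζ) / (ζ - a j)) z)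
      = Complex.abs (z * logDeriv (fun ζ : ℂ => ∏ j, (1 - (starRingEnd ℂ) (a j) * ζ) / (ζ - a j)) z) := by
    rw [map_mul, hz, one_mul]
  rw [h2, hzl, abs_ofReal, _root_.abs_of_nonneg hTnn]



lemma growth_disk (n : ℕ) (a : Fin n → ℂ) (c : ℂ) (hc : c ≠ 0)
    (b : Fin n → ℂ) (hb : ∀ k, Complex.abs (b k) < 1) (m : ℝ) (hm : 0 < m)
    (hcirc : ∀ ζ : ℂ, Complex.abs ζ = 1 →
      m * Complex.abs (∏ j, (ζ - a j)) ≤ Complex.abs (c * ∏ k, (ζ - b k))) :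
    ∀ ζ : ℂ, Complex.abs ζ ≤ 1 →
      m * Complex.abs (∏ j, (ζ - (starRingEnd ℂ) (a j))) ≤
        Complex.abs (c * ∏ k, (1 - b k * ζ)) := by
  have hden : ∀ ζ : ℂ, Complex.abs ζ ≤ 1 → c * ∏ k, (1 - b k * ζ) ≠ 0 := by
    intro ζ hζ
    refine mul_ne_zero hc (Finset.prod_ne_zero_iff.mpr fun k _ => ?_)
    intro h
    have h1 : (1 : ℂ) = b k * ζ := by linear_combination h
    have h2 : (1 : ℝ) = Complex.abs (b k) * Complex.abs ζ := by
      rw [← map_mul, ← h1]; simp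
    nlinarith [Complex.abs.nonneg (b k), Complex.abs.nonneg ζ, hb k]
  set H : ℂ → ℂ := fun ζ => (∏ j, (ζ - (starRingEnd ℂ) (a j))) / (c * ∏ k, (1 - b k * ζ)) with hH
  have hdiff : DifferentiableOn ℂ H (Metric.closedBall (0:ℂ) 1) := by
    intro x hx
    apply DifferentiableAt.differentiableWithinAt
    apply DifferentiableAt.div
    · exact DifferentiableAt.fun_finsetProd fun j _ => differentiableAt_fun_id.sub_const _
    · exact ((DifferentiableAt.fun_finsetProd fun k _ =>
        (differentiableAt_const _).sub (differentiableAt_fun_id.const_mul _)).const_mul c)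
    · exact hden x (by simpa [Complex.norm_eq_abs] using Metric.mem_closedBall.mp hx)
  have hdcc : DiffContOnCl ℂ H (Metric.ball (0:ℂ) 1) := by
    apply DifferentiableOn.diffContOnCl
    rwa [closure_ball (0:ℂ) one_ne_zero]
  have hbound : ∀ ζ ∈ frontier (Metric.ball (0:ℂ) 1), ‖H ζ‖ ≤ 1/m := by
    rw [frontier_ball (0:ℂ) one_ne_zero]
    intro ζ hζ
    have hζ1 : Complex.abs ζ = 1 := by
      simpa [Complex.norm_eq_abs] using mem_sphere_zero_iff_norm.mp hζ
    have hcz : Complex.abs ((starRingEnd ℂ) ζ) = 1 := by rwa [abs_conj]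
    have hA : Complex.abs (∏ j, (ζ - (starRingEnd ℂ) (a j)))
        = Complex.abs (∏ j, ((starRingEnd ℂ) ζ - a j)) := by
      rw [map_prod, map_prod]
      refine Finset.prod_congr rfl fun j _ => ?_
      rw [show ζ - (starRingEnd ℂ) (a j) = (starRingEnd ℂ) ((starRingEnd ℂ) ζ - a j) by
        rw [map_sub]; simp, abs_conj]
    have hBv : Complex.abs (c * ∏ k, (1 - b k * ζ))
        = Complex.abs (c * ∏ k, ((starRingEnd ℂ) ζ - b k)) := by
      rw [map_mul, map_mul, map_prod, map_prod]
      congr 1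
      refine Finset.prod_congr rfl fun k _ => ?_
      have : (1 : ℂ) - b k * ζ = ζ * ((starRingEnd ℂ) ζ - b k) := by
        rw [mul_sub, mul_conj]
        rw [show normSq ζ = 1 by rw [normSq_eq_abs, hζ1]; norm_num]
        push_cast; ring
      rw [this, map_mul, hζ1, one_mul]
    have hkey := hcirc ((starRingEnd ℂ) ζ) hcz
    have hBpos : 0 < Complex.abs (c * ∏ k, (1 - b k * ζ)) := by
      have := hden ζ (le_of_eq hζ1)
      exact Complex.abs.pos this
    rw [hH]
    simp only [norm_div, Complex.norm_eq_abs]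
    rw [div_le_div_iff₀ hBpos hm]
    rw [hA, hBv]
    calc Complex.abs (∏ j, ((starRingEnd ℂ) ζ - a j)) * m
        = m * Complex.abs (∏ j, ((starRingEnd ℂ) ζ - a j)) := by ring
      _ ≤ Complex.abs (c * ∏ k, ((starRingEnd ℂ) ζ - b k)) := by
          have h2 : Complex.abs (∏ j, ((starRingEnd ℂ) ζ - a j))
              = Complex.abs (∏ j : Fin n, ((starRingEnd ℂ) ζ - a j)) := rfl
          exact hkey
      _ = 1 * Complex.abs (c * ∏ k, ((starRingEnd ℂ) ζ - b k)) := by ring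
  intro ζ hζ
  have hmem : ζ ∈ closure (Metric.ball (0:ℂ) 1) := by
    rw [closure_ball (0:ℂ) one_ne_zero]
    simpa [Complex.norm_eq_abs] using hζ
  have := Complex.norm_le_of_forall_mem_frontier_norm_le Metric.isBounded_ball hdcc hbound hmem
  rw [hH] at this
  simp only [norm_div, Complex.norm_eq_abs] at this
  have hBpos : 0 < Complex.abs (c * ∏ k, (1 - b k * ζ)) := Complex.abs.pos (hden ζ hζ)
  rw [div_le_div_iff₀ hBpos hm] at this
  calc m * Complex.abs (∏ j, (ζ - (starRingEnd ℂ) (a j)))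
      = Complex.abs (∏ j, (ζ - (starRingEnd ℂ) (a j))) * m := by ring
    _ ≤ 1 * Complex.abs (c * ∏ k, (1 - b k * ζ)) := this
    _ = Complex.abs (c * ∏ k, (1 - b k * ζ)) := by ring

lemma growth_lead (n : ℕ) (a : Fin n → ℂ) (c : ℂ) (hc : c ≠ 0)
    (b : Fin n → ℂ) (hb : ∀ k, Complex.abs (b k) < 1) (m : ℝ) (hm : 0 < m)
    (hcirc : ∀ ζ : ℂ, Complex.abs ζ = 1 →
      m * Complex.abs (∏ j, (ζ - a j)) ≤ Complex.abs (c * ∏ k, (ζ - b k))) :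
    m * ∏ j, Complex.abs (a j) ≤ Complex.abs c := by
  have := growth_disk n a c hc b hb m hm hcirc 0 (by simp)
  simpa using this

lemma growth_ext (n : ℕ) (a : Fin n → ℂ) (c : ℂ) (hc : c ≠ 0)
    (b : Fin n → ℂ) (hb : ∀ k, Complex.abs (b k) < 1) (m : ℝ) (hm : 0 < m)
    (hcirc : ∀ ζ : ℂ, Complex.abs ζ = 1 →
      m * Complex.abs (∏ j, (ζ - a j)) ≤ Complex.abs (c * ∏ k, (ζ - b k)))
    (z₀ : ℂ) (hz₀ : 1 ≤ Complex.abs z₀) :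
    m * Complex.abs (∏ j, (1 - (starRingEnd ℂ) (a j) * z₀)) ≤
      Complex.abs (c * ∏ k, (z₀ - b k)) := by
  have hz0ne : z₀ ≠ 0 := by
    intro h; rw [h] at hz₀; simp at hz₀; linarith
  set ζ := z₀⁻¹ with hζdef
  have hζ : Complex.abs ζ ≤ 1 := by
    rw [hζdef, map_inv₀]
    rw [inv_le_one_iff₀]
    right; exact hz₀
  have hkey := growth_disk n a c hc b hb m hm hcirc ζ hζ
  have he1 : z₀ ^ n * ∏ j, (ζ - (starRingEnd ℂ) (a j))
      = ∏ j, (1 - (starRingEnd ℂ) (a j) * z₀) := by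
    calc z₀ ^ n * ∏ j, (ζ - (starRingEnd ℂ) (a j))
        = ∏ j : Fin n, (z₀ * (ζ - (starRingEnd ℂ) (a j))) := by
          rw [Finset.prod_mul_distrib, Finset.prod_const, Finset.card_univ, Fintype.card_fin]
      _ = ∏ j, (1 - (starRingEnd ℂ) (a j) * z₀) := Finset.prod_congr rfl fun j _ => by
          rw [hζdef, mul_sub, mul_inv_cancel₀ hz0ne]; ring
  have he2 : z₀ ^ n * ∏ k, ((1:ℂ) - b k * ζ) = ∏ k, (z₀ - b k) := by
    calc z₀ ^ n * ∏ k, ((1:ℂ) - b k * ζ)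
        = ∏ k : Fin n, (z₀ * ((1:ℂ) - b k * ζ)) := by
          rw [Finset.prod_mul_distrib, Finset.prod_const, Finset.card_univ, Fintype.card_fin]
      _ = ∏ k, (z₀ - b k) := Finset.prod_congr rfl fun k _ => by
          rw [hζdef]
          field_simp
  calc m * Complex.abs (∏ j, (1 - (starRingEnd ℂ) (a j) * z₀))
      = Complex.abs z₀ ^ n * (m * Complex.abs (∏ j, (ζ - (starRingEnd ℂ) (a j)))) := by
        rw [← he1, map_mul, map_pow]; ring
    _ ≤ Complex.abs z₀ ^ n * Complex.abs (c * ∏ k, ((1:ℂ) - b k * ζ)) := by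
        apply mul_le_mul_of_nonneg_left hkey (by positivity)
    _ = Complex.abs (c * ∏ k, (z₀ - b k)) := by
        rw [← he2, map_mul, map_mul, map_mul, map_pow]; ring


end TuranAux
open TuranAux in
set_option maxHeartbeats 1000000 in
theorem turan_rational_min_modulus_unit
    (n : ℕ) (a : Fin n → ℂ) (ha : ∀ j, 1 < ‖a j‖)
    (w B : ℂ → ℂ)
    (hw : ∀ z, w z = ∏ j, (z - a j))
    (hB : ∀ z, B z = ∏ j, (1 - (starRingEnd ℂ) (a j) * z) / (z - a j))
    (p : Polynomial ℂ) (hp0 : p ≠ 0) (hdeg : p.natDegree = n)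
    (hzeros : ∀ z : ℂ, p.IsRoot z → ‖z‖ ≤ 1)
    (r : ℂ → ℂ) (hr : ∀ z, r z = p.eval z / w z)
    (m' : ℝ) (hm' : IsLeast ((fun ζ => ‖r ζ‖) '' Metric.sphere (0 : ℂ) 1) m')
    (z : ℂ) (hz : ‖z‖ = 1) :
    ‖deriv r z‖ ≥ (1 / 2) * ‖deriv B z‖ * (‖r z‖ + m') := by
  simp only [Complex.norm_eq_abs] at ha hzeros hm' hz ⊢
  have hza : ∀ ζ : ℂ, Complex.abs ζ = 1 → ∀ j, ζ - a j ≠ 0 := by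
    intro ζ hζ j h
    rw [sub_eq_zero] at h
    have h2 := ha j
    rw [← h, hζ] at h2
    linarith
  obtain ⟨c, b, hc, hclead, hroots, heval⟩ := TuranAux.exists_factorization n p hp0 hdeg
  have hBfun : B = fun ζ => ∏ j, (1 - (starRingEnd ℂ) (a j) * ζ) / (ζ - a j) := funext hB
  have hrfun : r = fun ζ => (c * ∏ k, (ζ - b k)) / ∏ j, (ζ - a j) := by
    funext ζ
    rw [hr, hw, heval]
  subst hBfun hrfun
  simp only at hm' ⊢
  rw [ge_iff_le]
  set T : ℝ := ∑ j, (normSq (a j) - 1) / normSq (z - a j) with hTdef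
  have DB : Complex.abs (deriv (fun ζ => ∏ j, (1 - (starRingEnd ℂ) (a j) * ζ) / (ζ - a j)) z)
      = T := TuranAux.B_deriv_abs n a ha z hz (hza z hz)
  rw [DB]
  have hb : ∀ k, Complex.abs (b k) ≤ 1 := fun k => hzeros _ (hroots k)
  have hTnn : 0 ≤ T := by
    apply Finset.sum_nonneg
    intro j _
    apply div_nonneg _ (normSq_nonneg _)
    have h1 : 1 < normSq (a j) := by rw [← sq_abs]; nlinarith [ha j]
    linarith
  set X : ℝ := Complex.abs ((c * ∏ k, (z - b k)) / ∏ j, (z - a j)) with hXdef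
  have hcore0 : T / 2 * X ≤
      Complex.abs (deriv (fun ζ => (c * ∏ k, (ζ - b k)) / ∏ j, (ζ - a j)) z) :=
    TuranAux.core n a ha c hc b hb z hz
  have hm'nonneg : 0 ≤ m' := by
    obtain ⟨ζ₀, _, hv⟩ := hm'.1
    rw [← hv]
    exact Complex.abs.nonneg _
  have hmle : m' ≤ X := by
    refine hm'.2 ⟨z, ?_, rfl⟩
    rw [Metric.mem_sphere, Complex.dist_eq, sub_zero, Complex.norm_eq_abs, hz]
  set R : ℝ := Complex.abs (deriv (fun ζ => (c * ∏ k, (ζ - b k)) / ∏ j, (ζ - a j)) z)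
    with hRdef
  rcases eq_or_lt_of_le hm'nonneg with hm0 | hmpos
  · have he : (1:ℝ)/2 * T * (X + m') = T/2 * X := by rw [← hm0]; ring
    rw [he]
    exact hcore0
  rcases eq_or_lt_of_le hTnn with hT0 | hTpos
  · rw [← hT0]
    have : (0:ℝ)/2 * X ≤ R := by rw [← hT0] at hcore0; exact hcore0
    nlinarith [Complex.abs.nonneg (deriv (fun ζ => (c * ∏ k, (ζ - b k)) / ∏ j, (ζ - a j)) z)]
  -- main case : 0 < m', 0 < T
  have hbk1 : ∀ k, Complex.abs (b k) < 1 := by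
    intro k
    rcases lt_or_eq_of_le (hb k) with h | h
    · exact h
    · exfalso
      have hmem : (b k) ∈ Metric.sphere (0:ℂ) 1 := by
        rw [Metric.mem_sphere, Complex.dist_eq, sub_zero, Complex.norm_eq_abs, h]
      have hle : m' ≤ Complex.abs ((c * ∏ i, (b k - b i)) / ∏ j, (b k - a j)) :=
        hm'.2 ⟨b k, hmem, rfl⟩
      rw [Finset.prod_eq_zero (Finset.mem_univ k) (sub_self (b k))] at hle
      simp at hle
      linarith
  have hcirc : ∀ ζ : ℂ, Complex.abs ζ = 1 →
      m' * Complex.abs (∏ j, (ζ - a j)) ≤ Complex.abs (c * ∏ k, (ζ - b k)) := by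
    intro ζ hζ
    have hmem : ζ ∈ Metric.sphere (0:ℂ) 1 := by
      rw [Metric.mem_sphere, Complex.dist_eq, sub_zero, Complex.norm_eq_abs, hζ]
    have hle : m' ≤ Complex.abs ((c * ∏ k, (ζ - b k)) / ∏ j, (ζ - a j)) :=
      hm'.2 ⟨ζ, hmem, rfl⟩
    rw [map_div₀] at hle
    have hDpos : 0 < Complex.abs (∏ j, (ζ - a j)) :=
      Complex.abs.pos (Finset.prod_ne_zero_iff.mpr fun j _ => hza ζ hζ j)
    rw [le_div_iff₀ hDpos] at hle
    linarith
  have hlead : m' * ∏ j, Complex.abs (a j) ≤ Complex.abs c :=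
    TuranAux.growth_lead n a c hc b hbk1 m' hmpos hcirc
  have hext : ∀ z₀ : ℂ, 1 ≤ Complex.abs z₀ →
      m' * Complex.abs (∏ j, (1 - (starRingEnd ℂ) (a j) * z₀)) ≤
        Complex.abs (c * ∏ k, (z₀ - b k)) :=
    fun z₀ h => TuranAux.growth_ext n a c hc b hbk1 m' hmpos hcirc z₀ h
  -- the Wstar polynomial
  set Wst : Polynomial ℂ := ∏ j, (Polynomial.C (-((starRingEnd ℂ) (a j))) * Polynomial.X
    + Polynomial.C 1) with hWstdef
  have hane : ∀ j, -((starRingEnd ℂ) (a j)) ≠ 0 := by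
    intro j h
    rw [neg_eq_zero] at h
    have := ha j
    rw [show a j = 0 by simpa using congrArg (starRingEnd ℂ) h] at this
    simp at this
    linarith
  have hfacne : ∀ j : Fin n, (Polynomial.C (-((starRingEnd ℂ) (a j))) * Polynomial.X
      + Polynomial.C 1 : Polynomial ℂ) ≠ 0 := by
    intro j h
    have : ((Polynomial.C (-((starRingEnd ℂ) (a j))) * Polynomial.X + Polynomial.C 1 :
        Polynomial ℂ)).eval 0 = 0 := by rw [h]; simp
    simp at this
  have hWeval : ∀ ζ : ℂ, Wst.eval ζ = ∏ j, (1 - (starRingEnd ℂ) (a j) * ζ) := by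
    intro ζ
    rw [hWstdef, Polynomial.eval_prod]
    refine Finset.prod_congr rfl fun j _ => ?_
    simp
    ring
  have hWd : Wst.natDegree = n := by
    rw [hWstdef, Polynomial.natDegree_prod _ _ (fun j _ => hfacne j)]
    rw [Finset.sum_congr rfl fun j _ => Polynomial.natDegree_linear (hane j)]
    simp
  have hWlead : Wst.leadingCoeff = ∏ j, -((starRingEnd ℂ) (a j)) := by
    rw [hWstdef, Polynomial.leadingCoeff_prod]
    exact Finset.prod_congr rfl fun j _ => Polynomial.leadingCoeff_linear (hane j)
  have hWlead_abs : Complex.abs Wst.leadingCoeff = ∏ j, Complex.abs (a j) := by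
    rw [hWlead, map_prod]
    exact Finset.prod_congr rfl fun j _ => by simp
  -- differentiability
  have hdf : DifferentiableAt ℂ (fun ζ : ℂ => (c * ∏ k, (ζ - b k)) / ∏ j, (ζ - a j)) z := by
    apply DifferentiableAt.div
    · exact (DifferentiableAt.fun_finsetProd fun k _ => differentiableAt_fun_id.sub_const _).const_mul c
    · exact DifferentiableAt.fun_finsetProd fun j _ => differentiableAt_fun_id.sub_const _
    · exact Finset.prod_ne_zero_iff.mpr fun j _ => hza z hz j
  have hdg : DifferentiableAt ℂ
      (fun ζ : ℂ => ∏ j, (1 - (starRingEnd ℂ) (a j) * ζ) / (ζ - a j)) z := by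
    apply DifferentiableAt.fun_finsetProd
    intro j _
    exact DifferentiableAt.div
      ((differentiableAt_const _).sub (differentiableAt_fun_id.const_mul _))
      (differentiableAt_fun_id.sub_const _) (hza z hz j)
  -- the key inequality
  have KEY : ∀ β : ℂ, Complex.abs β < m' →
      T / 2 * Complex.abs ((c * ∏ k, (z - b k)) / ∏ j, (z - a j)
          - β * ∏ j, (1 - (starRingEnd ℂ) (a j) * z) / (z - a j))
        ≤ Complex.abs (deriv (fun ζ => (c * ∏ k, (ζ - b k)) / ∏ j, (ζ - a j)) z
          - β * deriv (fun ζ => ∏ j, (1 - (starRingEnd ℂ) (a j) * ζ) / (ζ - a j)) z) := by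
    intro β hβ
    set q : Polynomial ℂ := p - Polynomial.C β * Wst with hqdef
    have hprodpos : 0 < ∏ j, Complex.abs (a j) :=
      Finset.prod_pos fun j _ => lt_trans zero_lt_one (ha j)
    have habslt : Complex.abs (β * Wst.leadingCoeff) < Complex.abs c := by
      rw [map_mul, hWlead_abs]
      calc Complex.abs β * ∏ j, Complex.abs (a j)
          < m' * ∏ j, Complex.abs (a j) := by
            exact mul_lt_mul_of_pos_right hβ hprodpos
        _ ≤ Complex.abs c := hlead
    have hqcoeff : q.coeff n = c - β * Wst.leadingCoeff := by
      rw [hqdef, Polynomial.coeff_sub, Polynomial.coeff_C_mul]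
      congr 1
      · rw [hclead, Polynomial.leadingCoeff, hdeg]
      · rw [Polynomial.leadingCoeff, hWd] at *
    have hqcne : q.coeff n ≠ 0 := by
      rw [hqcoeff]
      intro h
      rw [sub_eq_zero] at h
      rw [← h] at habslt
      exact lt_irrefl _ habslt
    have hqne : q ≠ 0 := by
      intro h
      rw [h] at hqcne
      simp at hqcne
    have hqdeg : q.natDegree = n := by
      refine le_antisymm ?_ (Polynomial.le_natDegree_of_ne_zero hqcne)
      refine le_trans (Polynomial.natDegree_sub_le _ _) (max_le (le_of_eq hdeg) ?_)
      exact le_trans (Polynomial.natDegree_C_mul_le _ _) (le_of_eq hWd)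
    have hqroots : ∀ ζ : ℂ, q.IsRoot ζ → Complex.abs ζ ≤ 1 := by
      intro ζ hroot
      by_contra habs1
      push_neg at habs1
      have h1 : p.eval ζ = β * Wst.eval ζ := by
        have := hroot
        rw [Polynomial.IsRoot, hqdef, Polynomial.eval_sub, Polynomial.eval_mul,
          Polynomial.eval_C, sub_eq_zero] at this
        exact this
      have hWζ : Wst.eval ζ ≠ 0 := by
        intro h0
        rw [h0, mul_zero] at h1
        have := hzeros ζ h1
        linarith
      have hWpos : 0 < Complex.abs (Wst.eval ζ) := Complex.abs.pos hWζ
      have h2 : m' * Complex.abs (Wst.eval ζ) ≤ Complex.abs (p.eval ζ) := by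
        rw [hWeval, heval]
        exact hext ζ (le_of_lt habs1)
      rw [h1, map_mul] at h2
      nlinarith
    obtain ⟨c', b', hc', _, hroots', heval'⟩ := TuranAux.exists_factorization n q hqne hqdeg
    have hb' : ∀ k, Complex.abs (b' k) ≤ 1 := fun k => hqroots _ (hroots' k)
    have hcore := TuranAux.core n a ha c' hc' b' hb' z hz
    -- identify values
    have hval : ∀ ζ : ℂ, (∏ j, (ζ - a j)) ≠ 0 →
        (c' * ∏ k, (ζ - b' k)) / ∏ j, (ζ - a j)
          = (c * ∏ k, (ζ - b k)) / ∏ j, (ζ - a j)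
            - β * ∏ j, (1 - (starRingEnd ℂ) (a j) * ζ) / (ζ - a j) := by
      intro ζ hζne
      have hnum : c' * ∏ k, (ζ - b' k)
          = c * ∏ k, (ζ - b k) - β * ∏ j, (1 - (starRingEnd ℂ) (a j) * ζ) := by
        rw [← heval' ζ, hqdef, Polynomial.eval_sub, Polynomial.eval_mul, Polynomial.eval_C,
          heval ζ, hWeval ζ]
      rw [hnum, sub_div, Finset.prod_div_distrib, mul_div_assoc, mul_div_assoc]
    -- identify derivatives
    have hEV : (fun ζ : ℂ => (c' * ∏ k, (ζ - b' k)) / ∏ j, (ζ - a j))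
        =ᶠ[nhds z] (fun ζ : ℂ => (c * ∏ k, (ζ - b k)) / ∏ j, (ζ - a j)
          - β * ∏ j, (1 - (starRingEnd ℂ) (a j) * ζ) / (ζ - a j)) := by
      have hUopen : IsOpen {ζ : ℂ | (∏ j, (ζ - a j)) ≠ 0} := by
        have hcont : Continuous fun ζ : ℂ => ∏ j, (ζ - a j) :=
          continuous_finset_prod _ fun j _ => continuous_id.sub continuous_const
        exact isOpen_compl_singleton.preimage hcont
      have hUz : z ∈ {ζ : ℂ | (∏ j, (ζ - a j)) ≠ 0} :=
        Finset.prod_ne_zero_iff.mpr fun j _ => hza z hz j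
      filter_upwards [hUopen.mem_nhds hUz] with ζ hζ
      exact hval ζ hζ
    have hderiv_eq : deriv (fun ζ : ℂ => (c' * ∏ k, (ζ - b' k)) / ∏ j, (ζ - a j)) z
        = deriv (fun ζ => (c * ∏ k, (ζ - b k)) / ∏ j, (ζ - a j)) z
          - β * deriv (fun ζ => ∏ j, (1 - (starRingEnd ℂ) (a j) * ζ) / (ζ - a j)) z := by
      rw [hEV.deriv_eq, deriv_fun_sub hdf ((hdg.const_mul β)), deriv_const_mul β hdg]
    rw [hval z (Finset.prod_ne_zero_iff.mpr fun j _ => hza z hz j), hderiv_eq] at hcore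
    exact hcore
  -- final numeric argument
  have hBz1 : Complex.abs (∏ j, (1 - (starRingEnd ℂ) (a j) * z) / (z - a j)) = 1 :=
    TuranAux.B_abs_one n a ha z hz (hza z hz)
  have hgBne : deriv (fun ζ => ∏ j, (1 - (starRingEnd ℂ) (a j) * ζ) / (ζ - a j)) z ≠ 0 := by
    intro h
    rw [h] at DB
    simp at DB
    rw [← DB] at hTpos
    exact lt_irrefl _ hTpos
  have hR : m' * T ≤ R := by
    by_contra hlt
    push_neg at hlt
    set β : ℂ := deriv (fun ζ => (c * ∏ k, (ζ - b k)) / ∏ j, (ζ - a j)) z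
      / deriv (fun ζ => ∏ j, (1 - (starRingEnd ℂ) (a j) * ζ) / (ζ - a j)) z with hβdef
    have hβ : Complex.abs β < m' := by
      rw [hβdef, map_div₀, DB, ← hRdef, div_lt_iff₀ hTpos]
      linarith
    have hk := KEY β hβ
    have hzero : deriv (fun ζ => (c * ∏ k, (ζ - b k)) / ∏ j, (ζ - a j)) z
        - β * deriv (fun ζ => ∏ j, (1 - (starRingEnd ℂ) (a j) * ζ) / (ζ - a j)) z = 0 := by
      rw [hβdef, div_mul_cancel₀ _ hgBne, sub_self]
    rw [hzero, map_zero] at hk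
    have hA0 : Complex.abs ((c * ∏ k, (z - b k)) / ∏ j, (z - a j)
        - β * ∏ j, (1 - (starRingEnd ℂ) (a j) * z) / (z - a j)) = 0 := by
      have := Complex.abs.nonneg ((c * ∏ k, (z - b k)) / ∏ j, (z - a j)
        - β * ∏ j, (1 - (starRingEnd ℂ) (a j) * z) / (z - a j))
      nlinarith
    rw [Complex.abs.eq_zero, sub_eq_zero] at hA0
    have : X = Complex.abs β * 1 := by
      rw [hXdef, hA0, map_mul, hBz1]
    rw [mul_one] at this
    rw [this] at hmle
    exact lt_irrefl _ (lt_of_lt_of_le hβ hmle)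
  have hstep : ∀ t : ℝ, 0 ≤ t → t < 1 → T / 2 * X + t * m' * T / 2 ≤ R := by
    intro t ht0 ht1
    have hmT : 0 < m' * T := mul_pos hmpos hTpos
    have hRpos : 0 < R := lt_of_lt_of_le hmT hR
    have hfne : deriv (fun ζ => (c * ∏ k, (ζ - b k)) / ∏ j, (ζ - a j)) z ≠ 0 := by
      intro h
      rw [hRdef, h] at hRpos
      simp at hRpos
    set x : ℝ := t * m' * T / R with hxdef
    have hx0 : 0 ≤ x := by positivity
    have hx1 : x ≤ 1 := by
      rw [hxdef, div_le_one hRpos]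
      nlinarith
    set β : ℂ := (x : ℂ) *
      (deriv (fun ζ => (c * ∏ k, (ζ - b k)) / ∏ j, (ζ - a j)) z
        / deriv (fun ζ => ∏ j, (1 - (starRingEnd ℂ) (a j) * ζ) / (ζ - a j)) z) with hβdef
    have hβabs : Complex.abs β = t * m' := by
      rw [hβdef, map_mul, abs_ofReal, _root_.abs_of_nonneg hx0, map_div₀, DB, ← hRdef, hxdef]
      field_simp
    have hβ : Complex.abs β < m' := by
      rw [hβabs]
      nlinarith
    have hk := KEY β hβ
    have hrhs : Complex.abs (deriv (fun ζ => (c * ∏ k, (ζ - b k)) / ∏ j, (ζ - a j)) z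
        - β * deriv (fun ζ => ∏ j, (1 - (starRingEnd ℂ) (a j) * ζ) / (ζ - a j)) z)
        = R - t * m' * T := by
      rw [hβdef, mul_assoc, div_mul_cancel₀ _ hgBne]
      have he : deriv (fun ζ => (c * ∏ k, (ζ - b k)) / ∏ j, (ζ - a j)) z
          - (x:ℂ) * deriv (fun ζ => (c * ∏ k, (ζ - b k)) / ∏ j, (ζ - a j)) z
          = ((1 - x : ℝ) : ℂ) * deriv (fun ζ => (c * ∏ k, (ζ - b k)) / ∏ j, (ζ - a j)) z := by
        push_cast
        ring
      rw [he, map_mul, abs_ofReal, _root_.abs_of_nonneg (by linarith : (0:ℝ) ≤ 1 - x), ← hRdef]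
      rw [hxdef]
      field_simp
    have hlhs : X - t * m' ≤ Complex.abs ((c * ∏ k, (z - b k)) / ∏ j, (z - a j)
        - β * ∏ j, (1 - (starRingEnd ℂ) (a j) * z) / (z - a j)) := by
      have h1 := norm_sub_norm_le ((c * ∏ k, (z - b k)) / ∏ j, (z - a j))
        (β * ∏ j, (1 - (starRingEnd ℂ) (a j) * z) / (z - a j))
      rw [Complex.norm_eq_abs, Complex.norm_eq_abs, Complex.norm_eq_abs] at h1
      rw [map_mul, hBz1, mul_one, hβabs] at h1
      exact h1
    rw [hrhs] at hk
    have h2 : T / 2 * (X - t * m') ≤ T / 2 * Complex.abs ((c * ∏ k, (z - b k)) / ∏ j, (z - a j)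
        - β * ∏ j, (1 - (starRingEnd ℂ) (a j) * z) / (z - a j)) :=
      mul_le_mul_of_nonneg_left hlhs (by linarith)
    nlinarith
  by_contra hcon
  push_neg at hcon
  have h0 := hstep 0 le_rfl one_pos
  have hkey : (1:ℝ)/2 * T * (X + m') = T/2 * X + m' * T / 2 := by ring
  rw [hkey] at hcon
  set D : ℝ := R - T / 2 * X with hDdef
  have hD0 : 0 ≤ D := by rw [hDdef]; linarith [h0]
  have hDlt : D < m' * T / 2 := by linarith
  have hmT : 0 < m' * T := mul_pos hmpos hTpos
  set t₀ : ℝ := (D + m' * T / 2) / (m' * T) with ht₀def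
  have ht₀0 : 0 ≤ t₀ := div_nonneg (by linarith) (le_of_lt hmT)
  have ht₀1 : t₀ < 1 := by
    rw [ht₀def, div_lt_one hmT]
    linarith
  have hs := hstep t₀ ht₀0 ht₀1
  have ht₀eq : t₀ * m' * T = D + m' * T / 2 := by
    rw [ht₀def]
    field_simp
  nlinarith
end

section
/- Let n ∈ ℕ, let a_1,…,a_n ∈ ℂ with |a_j| > 1 for all j, let w(z) = ∏_{j=1}^n (z − a_j) and let B be the associated Blaschke product. Let 0 < k ≤ 1, let m ∈ ℕ with m ≤ n, let p be a complex polynomial of degree exactly m all of whose zeros lie in the closed disk {z : |z| ≤ k}, and set r(z) = p(z)/w(z). Then for every z ∈ ℂ with |z| = 1, |r′(z)| ≥ (1/2) · { |B′(z)| − (n(1 + k) − 2m)/(1 + k) } · |r(z)|. -/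
open Complex Polynomial

lemma aux_re_div {z c : ℂ} (h1 : z.re^2 + z.im^2 = 1) (hq : Complex.normSq (z - c) ≠ 0) :
    1 - 2 * (z / (z - c)).re = (Complex.normSq c - 1) / Complex.normSq (z - c) := by
  rw [Complex.div_re]
  have hq' : Complex.normSq (z - c) > 0 :=
    lt_of_le_of_ne (Complex.normSq_nonneg _) (Ne.symm hq)
  field_simp
  simp only [Complex.normSq_apply, Complex.sub_re, Complex.sub_im]
  ring_nf
  nlinarith [h1]

lemma aux_re_lb {z c : ℂ} (h1 : z.re^2 + z.im^2 = 1) (hq : Complex.normSq (z - c) ≠ 0)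
    {k : ℝ} (hk0 : 0 < k) (hk1 : k ≤ 1) (hc : ‖c‖ ≤ k) :
    (z / (z - c)).re ≥ 1 / (1 + k) := by
  rw [Complex.div_re]
  have hq' : Complex.normSq (z - c) > 0 :=
    lt_of_le_of_ne (Complex.normSq_nonneg _) (Ne.symm hq)
  have hs : c.re^2 + c.im^2 ≤ k^2 := by
    have h := Complex.normSq_eq_norm_sq c
    simp only [Complex.normSq_apply] at h
    nlinarith [norm_nonneg c]
  have hcs : (z.re * c.re + z.im * c.im)^2 ≤ c.re^2 + c.im^2 := by
    nlinarith [sq_nonneg (z.re * c.im - z.im * c.re)]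
  have ht : -k ≤ z.re * c.re + z.im * c.im := by
    nlinarith [sq_nonneg (z.re * c.re + z.im * c.im + k)]
  have hmul : (1 - k) * (z.re * c.re + z.im * c.im + k) ≥ 0 :=
    mul_nonneg (by linarith) (by linarith)
  rw [ge_iff_le, ← add_div, div_le_div_iff₀ (by positivity) hq']
  simp only [Complex.normSq_apply, Complex.sub_re, Complex.sub_im] at hq' ⊢
  nlinarith [hmul, hs, h1]

lemma aux_logDeriv_lin {z c : ℂ} :
    logDeriv (fun x => x - c) z = 1 / (z - c) := by
  rw [logDeriv_apply]
  have hd : deriv (fun x => x - c) z = 1 := by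
    simpa using ((hasDerivAt_id z).sub_const c).deriv
  rw [hd]

lemma aux_logDeriv_blaschke {z c : ℂ} (hzc : z * (starRingEnd ℂ) z = 1)
    (h1 : z - c ≠ 0) (h2 : (1 : ℂ) - (starRingEnd ℂ) c * z ≠ 0) :
    z * logDeriv (fun x => (1 - (starRingEnd ℂ) c * x) / (x - c)) z
      = ((Complex.normSq c - 1) / Complex.normSq (z - c) : ℝ) := by
  have hdnum : HasDerivAt (fun x : ℂ => 1 - (starRingEnd ℂ) c * x) (-(starRingEnd ℂ) c) z := by
    simpa using ((hasDerivAt_id z).const_mul ((starRingEnd ℂ) c)).const_sub 1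
  have hdden : HasDerivAt (fun x : ℂ => x - c) 1 z := by
    simpa using (hasDerivAt_id z).sub_const c
  rw [logDeriv_div z h2 h1 hdnum.differentiableAt hdden.differentiableAt,
    aux_logDeriv_lin, logDeriv_apply, hdnum.deriv]
  have e1 : (Complex.normSq (z - c) : ℂ) = (z - c) * ((starRingEnd ℂ) z - (starRingEnd ℂ) c) := by
    rw [← Complex.mul_conj]; simp [map_sub]
  have e2 : (Complex.normSq c : ℂ) = c * (starRingEnd ℂ) c :=
    (Complex.mul_conj c).symm
  have hcz : (starRingEnd ℂ) z - (starRingEnd ℂ) c ≠ 0 := by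
    intro h
    apply h1
    have : (starRingEnd ℂ) ((starRingEnd ℂ) z - (starRingEnd ℂ) c) = 0 := by rw [h]; simp
    simpa [map_sub] using this
  have hz0 : z ≠ 0 := by
    intro h; rw [h] at hzc; simp at hzc
  have key : (1 : ℂ) - (starRingEnd ℂ) c * z = z * ((starRingEnd ℂ) z - (starRingEnd ℂ) c) := by
    linear_combination -hzc
  rw [Complex.ofReal_div, Complex.ofReal_sub, Complex.ofReal_one, e1, e2, key]
  field_simp
  linear_combination -hzc

theorem turan_rational_zeros_in_disk
    (n : ℕ) (a : Fin n → ℂ) (ha : ∀ j, 1 < ‖a j‖)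
    (w B : ℂ → ℂ)
    (hw : ∀ z, w z = ∏ j, (z - a j))
    (hB : ∀ z, B z = ∏ j, (1 - (starRingEnd ℂ) (a j) * z) / (z - a j))
    (k : ℝ) (hk0 : 0 < k) (hk1 : k ≤ 1)
    (m : ℕ) (hmn : m ≤ n)
    (p : Polynomial ℂ) (hp0 : p ≠ 0) (hdeg : p.natDegree = m)
    (hzeros : ∀ z : ℂ, p.IsRoot z → ‖z‖ ≤ k)
    (r : ℂ → ℂ) (hr : ∀ z, r z = p.eval z / w z)
    (z : ℂ) (hz : ‖z‖ = 1) :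
    ‖deriv r z‖ ≥
      (1 / 2) * (‖deriv B z‖ - ((n : ℝ) * (1 + k) - 2 * (m : ℝ)) / (1 + k))
        * ‖r z‖ := by
  have hw' : w = fun x => ∏ j, (x - a j) := funext hw
  have hB' : B = fun x => ∏ j, (1 - (starRingEnd ℂ) (a j) * x) / (x - a j) := funext hB
  subst hw' hB'
  have hr' : r = fun x => p.eval x / ∏ j, (x - a j) := funext hr
  subst hr'
  -- basic facts about z
  have hnsq : Complex.normSq z = 1 := by rw [Complex.normSq_eq_norm_sq, hz]; norm_num
  have hzre : z.re ^ 2 + z.im ^ 2 = 1 := by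
    simpa [Complex.normSq_apply, sq] using hnsq
  have hzc : z * (starRingEnd ℂ) z = 1 := by rw [Complex.mul_conj, hnsq]; norm_num
  have hza : ∀ j, z - a j ≠ 0 := by
    intro j h
    have h2 : a j = z := by linear_combination -h
    have h3 := ha j
    rw [h2, hz] at h3
    exact lt_irrefl _ h3
  have hnumB : ∀ j, (1 : ℂ) - (starRingEnd ℂ) (a j) * z ≠ 0 := by
    intro j h
    have h2 : (starRingEnd ℂ) (a j) * z = 1 := by linear_combination -h
    have h3 : ‖(starRingEnd ℂ) (a j) * z‖ = 1 := by rw [h2]; simp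
    rw [norm_mul, Complex.norm_conj, hz, mul_one] at h3
    exact absurd (ha j) (by rw [h3]; norm_num)
  have hwz : (∏ j, (z - a j)) ≠ 0 := Finset.prod_ne_zero_iff.mpr fun j _ => hza j
  by_cases hpz : p.eval z = 0
  · have hr0 : ‖(fun x => p.eval x / ∏ j, (x - a j)) z‖ = 0 := by
      simp [hpz]
    rw [hr0, mul_zero]
    exact norm_nonneg _
  -- main case
  have hsp : Multiset.card p.roots = p.natDegree :=
    Polynomial.splits_iff_card_roots.mp (IsAlgClosed.splits p)
  set l := p.roots.toList with hl
  have hlen : l.length = m := by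
    rw [hl, Multiset.length_toList, hsp, hdeg]
  have hlc : p.leadingCoeff ≠ 0 := Polynomial.leadingCoeff_ne_zero.mpr hp0
  have hfac := Polynomial.C_leadingCoeff_mul_prod_multiset_X_sub_C hsp
  have heval : ∀ x : ℂ, p.eval x = p.leadingCoeff * ∏ i : Fin l.length, (x - l.get i) := by
    intro x
    conv_lhs => rw [← hfac]
    rw [eval_mul, eval_C, eval_multiset_prod, Multiset.map_map]
    congr 1
    have hroots : p.roots = (l : Multiset ℂ) := (Multiset.coe_toList _).symm
    rw [hroots, Multiset.map_coe, Multiset.prod_coe]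
    have hg : (eval x ∘ fun a : ℂ => X - C a) = fun ζ : ℂ => x - ζ := by
      funext ζ; simp
    rw [hg, ← List.ofFn_getElem_eq_map l (fun ζ : ℂ => x - ζ), List.prod_ofFn]
    rfl
  -- roots facts
  have hrootk : ∀ i : Fin l.length, ‖l.get i‖ ≤ k := fun i =>
    hzeros _ (Polynomial.isRoot_of_mem_roots (Multiset.mem_toList.mp (List.get_mem l i)))
  have hzl : ∀ i : Fin l.length, z - l.get i ≠ 0 := by
    intro i h
    have h2 : z = l.get i := by linear_combination h
    have := Polynomial.isRoot_of_mem_roots (Multiset.mem_toList.mp (List.get_mem l i))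
    rw [← h2] at this
    exact hpz this
  -- differentiability
  have hdden : DifferentiableAt ℂ (fun x : ℂ => ∏ j, (x - a j)) z :=
    DifferentiableAt.fun_finsetProd fun j _ => differentiableAt_id.sub_const _
  have hdnum : DifferentiableAt ℂ (fun x : ℂ => p.eval x) z :=
    p.differentiable.differentiableAt
  have hpeq : (fun x => p.eval x / ∏ j, (x - a j))
      = fun x => (p.leadingCoeff * ∏ i : Fin l.length, (x - l.get i)) / ∏ j, (x - a j) := by
    funext x; rw [heval x]
  have hnum_ne : p.leadingCoeff * ∏ i : Fin l.length, (z - l.get i) ≠ 0 :=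
    mul_ne_zero hlc (Finset.prod_ne_zero_iff.mpr fun i _ => hzl i)
  have hdnum2 : DifferentiableAt ℂ
      (fun x : ℂ => p.leadingCoeff * ∏ i : Fin l.length, (x - l.get i)) z :=
    (DifferentiableAt.fun_finsetProd fun i _ => differentiableAt_id.sub_const _).const_mul _
  have hlogr : logDeriv (fun x => p.eval x / ∏ j, (x - a j)) z
      = (∑ i : Fin l.length, 1 / (z - l.get i)) - ∑ j, 1 / (z - a j) := by
    rw [hpeq, logDeriv_div z hnum_ne hwz hdnum2 hdden]
    congr 1
    · rw [logDeriv_const_mul z _ hlc]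
      have e1 : logDeriv (fun x : ℂ => ∏ i : Fin l.length, (x - l.get i)) z
          = ∑ i : Fin l.length, logDeriv (fun x : ℂ => x - l.get i) z :=
        logDeriv_prod (s := Finset.univ) (f := fun (i : Fin l.length) (x : ℂ) => x - l.get i) (x := z)
          (fun i _ => hzl i) (fun i _ => differentiableAt_id.sub_const _)
      rw [e1]
      exact Finset.sum_congr rfl fun i _ => aux_logDeriv_lin
    · have e2 : logDeriv (fun x : ℂ => ∏ j, (x - a j)) z
          = ∑ j, logDeriv (fun x : ℂ => x - a j) z :=
        logDeriv_prod (s := Finset.univ) (f := fun (j : Fin n) (x : ℂ) => x - a j) (x := z)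
          (fun j _ => hza j) (fun j _ => differentiableAt_id.sub_const _)
      rw [e2]
      exact Finset.sum_congr rfl fun j _ => aux_logDeriv_lin
  -- Blaschke product part
  have hlogB : z * logDeriv (fun x => ∏ j, (1 - (starRingEnd ℂ) (a j) * x) / (x - a j)) z
      = ((∑ j, (Complex.normSq (a j) - 1) / Complex.normSq (z - a j) : ℝ) : ℂ) := by
    have e : logDeriv (fun x : ℂ => ∏ j, (1 - (starRingEnd ℂ) (a j) * x) / (x - a j)) z
        = ∑ j, logDeriv (fun x : ℂ => (1 - (starRingEnd ℂ) (a j) * x) / (x - a j)) z :=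
      logDeriv_prod (s := Finset.univ)
        (f := fun (j : Fin n) (x : ℂ) => (1 - (starRingEnd ℂ) (a j) * x) / (x - a j)) (x := z)
        (fun j _ => div_ne_zero (hnumB j) (hza j))
        (fun j _ => DifferentiableAt.div
          ((differentiableAt_const _).sub (differentiableAt_id.const_mul _))
          (differentiableAt_id.sub_const _) (hza j))
    rw [e, Finset.mul_sum, Complex.ofReal_sum]
    exact Finset.sum_congr rfl fun j _ => aux_logDeriv_blaschke hzc (hza j) (hnumB j)
  have hBne : (∏ j, (1 - (starRingEnd ℂ) (a j) * z) / (z - a j)) ≠ 0 :=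
    Finset.prod_ne_zero_iff.mpr fun j _ => div_ne_zero (hnumB j) (hza j)
  have habs1 : ∀ j, ‖1 - (starRingEnd ℂ) (a j) * z‖ = ‖z - a j‖ := by
    intro j
    have key : (1 : ℂ) - (starRingEnd ℂ) (a j) * z = z * (starRingEnd ℂ) (z - a j) := by
      rw [map_sub]; linear_combination -hzc
    rw [key, norm_mul, Complex.norm_conj, hz, one_mul]
  have hBabs : ‖∏ j, (1 - (starRingEnd ℂ) (a j) * z) / (z - a j)‖ = 1 := by
    rw [norm_prod]
    apply Finset.prod_eq_one
    intro j _
    rw [norm_div, habs1 j, div_self (norm_ne_zero_iff.mpr (hza j))]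
  have hD_nonneg : ∀ j ∈ Finset.univ,
      0 ≤ (Complex.normSq (a j) - 1) / Complex.normSq (z - a j) := by
    intro j _
    have h1 : 1 < Complex.normSq (a j) := by
      rw [Complex.normSq_eq_norm_sq]; nlinarith [ha j]
    exact div_nonneg (by linarith) (Complex.normSq_nonneg _)
  have hBderiv : ‖
        (deriv (fun x => ∏ j, (1 - (starRingEnd ℂ) (a j) * x) / (x - a j)) z)‖
      = ∑ j, (Complex.normSq (a j) - 1) / Complex.normSq (z - a j) := by
    have h0 : deriv (fun x => ∏ j, (1 - (starRingEnd ℂ) (a j) * x) / (x - a j)) z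
        = logDeriv (fun x => ∏ j, (1 - (starRingEnd ℂ) (a j) * x) / (x - a j)) z
          * (fun x => ∏ j, (1 - (starRingEnd ℂ) (a j) * x) / (x - a j)) z := by
      rw [logDeriv_apply, div_mul_cancel₀]
      exact hBne
    calc ‖deriv (fun x => ∏ j, (1 - (starRingEnd ℂ) (a j) * x) / (x - a j)) z‖
        = ‖logDeriv (fun x => ∏ j, (1 - (starRingEnd ℂ) (a j) * x) / (x - a j)) z‖
          * ‖∏ j, (1 - (starRingEnd ℂ) (a j) * z) / (z - a j)‖ := by
          rw [h0, norm_mul]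
      _ = ‖z * logDeriv (fun x => ∏ j, (1 - (starRingEnd ℂ) (a j) * x) / (x - a j)) z‖ := by
          rw [hBabs, mul_one, norm_mul, hz, one_mul]
      _ = ∑ j, (Complex.normSq (a j) - 1) / Complex.normSq (z - a j) := by
          rw [hlogB, Complex.norm_real, Real.norm_eq_abs, _root_.abs_of_nonneg (Finset.sum_nonneg hD_nonneg)]
  -- real part computation
  have hre : (z * logDeriv (fun x => p.eval x / ∏ j, (x - a j)) z).re
      = (∑ i : Fin l.length, (z / (z - l.get i)).re) - ∑ j, (z / (z - a j)).re := by
    rw [hlogr, mul_sub, Finset.mul_sum, Finset.mul_sum]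
    simp only [mul_one_div, Complex.sub_re, Complex.re_sum]
  have hsum_a : ∑ j, (z / (z - a j)).re
      = ((n : ℝ) - ∑ j, (Complex.normSq (a j) - 1) / Complex.normSq (z - a j)) / 2 := by
    have hjj : ∀ j ∈ Finset.univ, (z / (z - a j)).re
        = (1 - (Complex.normSq (a j) - 1) / Complex.normSq (z - a j)) / 2 := by
      intro j _
      have h := aux_re_div (c := a j) hzre ((Complex.normSq_pos.mpr (hza j)).ne')
      linarith
    rw [Finset.sum_congr rfl hjj, ← Finset.sum_div, Finset.sum_sub_distrib,
      Finset.sum_const, Finset.card_univ, Fintype.card_fin, nsmul_eq_mul, mul_one]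
  have hsum_l : (m : ℝ) / (1 + k) ≤ ∑ i : Fin l.length, (z / (z - l.get i)).re := by
    have hle : ∀ i ∈ Finset.univ, 1 / (1 + k) ≤ (z / (z - l.get i)).re := fun i _ =>
      aux_re_lb hzre ((Complex.normSq_pos.mpr (hzl i)).ne') hk0 hk1 (hrootk i)
    calc (m : ℝ) / (1 + k) = ∑ _i : Fin l.length, 1 / (1 + k) := by
          rw [Finset.sum_const, Finset.card_univ, Fintype.card_fin, hlen, nsmul_eq_mul]
          ring
      _ ≤ _ := Finset.sum_le_sum hle
  -- final assembly
  have hrz : p.eval z / (∏ j, (z - a j)) ≠ 0 := div_ne_zero hpz hwz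
  have hfin1 : ‖deriv (fun x => p.eval x / ∏ j, (x - a j)) z‖
      = ‖z * logDeriv (fun x => p.eval x / ∏ j, (x - a j)) z‖
        * ‖p.eval z / ∏ j, (z - a j)‖ := by
    calc ‖deriv (fun x => p.eval x / ∏ j, (x - a j)) z‖
        = ‖logDeriv (fun x => p.eval x / ∏ j, (x - a j)) z
            * (p.eval z / ∏ j, (z - a j))‖ := by
          rw [logDeriv_apply, div_mul_cancel₀]
          exact hrz
      _ = ‖z * logDeriv (fun x => p.eval x / ∏ j, (x - a j)) z‖
          * ‖p.eval z / ∏ j, (z - a j)‖ := by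
          rw [norm_mul, norm_mul, hz, one_mul]
  beta_reduce
  rw [hfin1, hBderiv]
  have hk1' : (1 : ℝ) + k ≠ 0 := by positivity
  have hcoef : (1 / 2) * ((∑ j, (Complex.normSq (a j) - 1) / Complex.normSq (z - a j))
        - ((n : ℝ) * (1 + k) - 2 * (m : ℝ)) / (1 + k))
      ≤ (z * logDeriv (fun x => p.eval x / ∏ j, (x - a j)) z).re := by
    have heq : (1 / 2) * ((∑ j, (Complex.normSq (a j) - 1) / Complex.normSq (z - a j))
          - ((n : ℝ) * (1 + k) - 2 * (m : ℝ)) / (1 + k))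
        = (m : ℝ) / (1 + k)
          - ((n : ℝ) - ∑ j, (Complex.normSq (a j) - 1) / Complex.normSq (z - a j)) / 2 := by
      field_simp
      ring
    rw [heq, hre, hsum_a]
    linarith [hsum_l]
  have habs_nonneg : (0 : ℝ) ≤ ‖p.eval z / ∏ j, (z - a j)‖ :=
    norm_nonneg _
  have hre_le : (z * logDeriv (fun x => p.eval x / ∏ j, (x - a j)) z).re
      ≤ ‖z * logDeriv (fun x => p.eval x / ∏ j, (x - a j)) z‖ :=
    Complex.re_le_norm _
  have := mul_le_mul_of_nonneg_right (hcoef.trans hre_le) habs_nonneg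
  exact this
end
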